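/- arXiv:2402.09994 — 6 statements merged into one kernel-verified Lean document; each statement's English description precedes it below -/
import Mathlib

section
/- Let A be a finite set of agents and M a finite set of divisible goods with one unit of each good, where each agent i ∈ A has a budget b_i > 0 and a utility function u_i. For any competitive equilibrium (x, p) and any Nash welfare maximizing allocation y, (∏_{i∈A} u_i(x_i)^{b_i})^{1/(∑_{i∈A} b_i)} ≥ (1/e)^{1/e} · (∏_{i∈A} u_i(y_i)^{b_i})^{1/(∑_{i∈A} b_i)}. -/
open scoped BigOperators

noncomputable section

/-- Scalar product `⟨p, x⟩ = ∑ j p_j x_j`. -/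
def dot {M : Type*} [Fintype M] (p x : M → ℝ) : ℝ := ∑ j, p j * x j

/-- A utility function on bundles of goods indexed by `M`: concave on the nonnegative
orthant, monotone non-decreasing, `u 0 = 0`, and positive somewhere. -/
structure IsUtility {M : Type*} [Fintype M] (u : (M → ℝ) → ℝ) : Prop where
  concave : ConcaveOn ℝ {x : M → ℝ | 0 ≤ x} u
  mono : ∀ ⦃x x' : M → ℝ⦄, 0 ≤ x → x ≤ x' → u x ≤ u x'
  zero : u 0 = 0
  exists_pos : ∃ x : M → ℝ, 0 ≤ x ∧ 0 < u x

/-- The demand correspondence `D^u(p,b)`: utility-maximizing bundles at prices `p`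
within budget `b`. -/
def Demand {M : Type*} [Fintype M] (u : (M → ℝ) → ℝ) (p : M → ℝ) (b : ℝ) :
    Set (M → ℝ) :=
  {x | 0 ≤ x ∧ dot p x ≤ b ∧ ∀ z : M → ℝ, 0 ≤ z → dot p z ≤ b → u z ≤ u x}

/-- Competitive equilibrium in a Fisher market with one unit of each good. -/
def IsCompetitiveEq {A M : Type*} [Fintype A] [Fintype M]
    (u : A → (M → ℝ) → ℝ) (b : A → ℝ) (x : A → M → ℝ) (p : M → ℝ) : Prop :=
  0 ≤ p ∧ (∀ i, x i ∈ Demand (u i) p (b i)) ∧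
    (∀ j, ∑ i, x i j ≤ 1) ∧ ∀ j, 0 < p j → ∑ i, x i j = 1

/-- `y` maximizes (weighted) Nash welfare, i.e. `∏ i, u i (y i) ^ b i` over feasible
allocations. -/
def MaxNashWelfare {A M : Type*} [Fintype A] [Fintype M]
    (u : A → (M → ℝ) → ℝ) (b : A → ℝ) (y : A → M → ℝ) : Prop :=
  (∀ i, 0 ≤ y i) ∧ (∀ j, ∑ i, y i j ≤ 1) ∧
    ∀ z : A → M → ℝ, (∀ i, 0 ≤ z i) → (∀ j, ∑ i, z i j ≤ 1) →
      ∏ i, (u i (z i)) ^ (b i) ≤ ∏ i, (u i (y i)) ^ (b i)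

private lemma pow_ge_exp0 {b c : ℝ} (hb : 0 < b) (hbc : b < c) :
    Real.exp (-(c * (Real.exp 1)⁻¹)) ≤ (b / c) ^ (b : ℝ) := by
  have hc : 0 < c := hb.trans hbc
  have hbc0 : 0 < b / c := div_pos hb hc
  rw [Real.rpow_def_of_pos hbc0, Real.exp_le_exp]
  have he : (0:ℝ) < Real.exp 1 := Real.exp_pos 1
  have hlog : Real.log (c / (b * Real.exp 1)) ≤ c / (b * Real.exp 1) - 1 :=
    Real.log_le_sub_one_of_pos (by positivity)
  rw [Real.log_div (ne_of_gt hc) (by positivity), Real.log_mul (ne_of_gt hb) (ne_of_gt he),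
    Real.log_exp] at hlog
  have h2 : Real.log c - Real.log b ≤ c / (b * Real.exp 1) := by linarith
  have h3 : b * (Real.log c - Real.log b) ≤ b * (c / (b * Real.exp 1)) :=
    mul_le_mul_of_nonneg_left h2 hb.le
  have h4 : b * (c / (b * Real.exp 1)) = c * (Real.exp 1)⁻¹ := by
    field_simp
  rw [Real.log_div (ne_of_gt hb) (ne_of_gt hc)]
  nlinarith

private lemma util_scale {M : Type*} [Fintype M] {u : (M → ℝ) → ℝ} (hu : IsUtility u)
    {z : M → ℝ} (hz : 0 ≤ z) {t : ℝ} (ht0 : 0 ≤ t) (ht1 : t ≤ 1) :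
    t * u z ≤ u (t • z) := by
  have h0 : (0 : M → ℝ) ∈ {x : M → ℝ | 0 ≤ x} := Set.mem_setOf_eq ▸ le_refl _
  have hzm : z ∈ {x : M → ℝ | 0 ≤ x} := Set.mem_setOf_eq ▸ hz
  have h := hu.concave.2 hzm h0 ht0 (by linarith : (0:ℝ) ≤ 1 - t) (by ring)
  simpa [hu.zero] using h

/-- The Nash welfare at any competitive equilibrium is at least `(1/e)^(1/e)` times
the maximum Nash welfare. -/
theorem nash_welfare_price_of_anarchy {A M : Type*} [Fintype A] [Fintype M]
    (u : A → (M → ℝ) → ℝ) (hu : ∀ i, IsUtility (u i))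
    (b : A → ℝ) (hb : ∀ i, 0 < b i)
    (x : A → M → ℝ) (p : M → ℝ) (hxp : IsCompetitiveEq u b x p)
    (y : A → M → ℝ) (hy : MaxNashWelfare u b y) :
    ((Real.exp 1)⁻¹ ^ (Real.exp 1)⁻¹) *
        (∏ i, (u i (y i)) ^ (b i)) ^ (∑ i, b i)⁻¹
      ≤ (∏ i, (u i (x i)) ^ (b i)) ^ (∑ i, b i)⁻¹ := by
  classical
  obtain ⟨hp, hdem, hsup, hfull⟩ := hxp
  obtain ⟨hy0, hyfeas, -⟩ := hy
  have hux0 : ∀ i, 0 ≤ u i (x i) := by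
    intro i
    have h := (hdem i).2.2 0 (le_refl _) (by simpa [dot] using (hb i).le)
    rw [(hu i).zero] at h; exact h
  have huy0 : ∀ i, 0 ≤ u i (y i) := fun i => by
    have h := (hu i).mono (le_refl (0 : M → ℝ)) (hy0 i)
    rw [(hu i).zero] at h; exact h
  set c : A → ℝ := fun i => dot p (y i) with hc
  have hc0 : ∀ i, 0 ≤ c i := fun i =>
    Finset.sum_nonneg fun j _ => mul_nonneg (hp j) (hy0 i j)
  have hcB : ∑ i, c i ≤ ∑ i, b i := by
    have h1 : ∑ i, c i ≤ ∑ j, p j := by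
      calc ∑ i, c i = ∑ j, p j * ∑ i, y i j := by
            simp only [hc, dot, Finset.mul_sum]
            rw [Finset.sum_comm]
        _ ≤ ∑ j, p j := Finset.sum_le_sum fun j _ =>
            mul_le_of_le_one_right (hp j) (hyfeas j)
    have h2 : ∑ j, p j ≤ ∑ i, b i := by
      have he : ∑ j, p j = ∑ i, dot p (x i) := by
        have hj : ∀ j, p j = p j * ∑ i, x i j := by
          intro j
          rcases (hp j).eq_or_lt with h | h
          · simp [← h]
          · rw [hfull j h, mul_one]
        calc ∑ j, p j = ∑ j, p j * ∑ i, x i j := Finset.sum_congr rfl fun j _ => hj j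
          _ = ∑ i, dot p (x i) := by
            simp only [dot, Finset.mul_sum]; rw [Finset.sum_comm]
      rw [he]
      exact Finset.sum_le_sum fun i _ => (hdem i).2.1
    linarith
  set m : A → ℝ := fun i => if c i ≤ b i then 1 else b i / c i with hm
  have hm0 : ∀ i, 0 ≤ m i := by
    intro i; simp only [hm]
    split
    · norm_num
    · next h => exact (div_pos (hb i) ((hb i).trans (lt_of_not_ge h))).le
  have hkey : ∀ i, m i * u i (y i) ≤ u i (x i) := by
    intro i
    simp only [hm]
    split
    · next h =>
      rw [one_mul]
      exact (hdem i).2.2 (y i) (hy0 i) h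
    · next h =>
      push_neg at h
      have hci : 0 < c i := (hb i).trans h
      have ht0 : 0 ≤ b i / c i := (div_pos (hb i) hci).le
      have ht1 : b i / c i ≤ 1 := (div_le_one hci).2 h.le
      have hz0 : (0 : M → ℝ) ≤ (b i / c i) • y i := fun j =>
        mul_nonneg ht0 (hy0 i j)
      have hbud : dot p ((b i / c i) • y i) ≤ b i := by
        have heq : dot p ((b i / c i) • y i) = (b i / c i) * c i := by
          simp only [dot, hc, Pi.smul_apply, smul_eq_mul, Finset.mul_sum]
          exact Finset.sum_congr rfl fun j _ => by ring
        rw [heq, div_mul_cancel₀ _ (ne_of_gt hci)]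
      calc (b i / c i) * u i (y i) ≤ u i ((b i / c i) • y i) :=
            util_scale (hu i) (hy0 i) ht0 ht1
        _ ≤ u i (x i) := (hdem i).2.2 _ hz0 hbud
  have hexp : ∀ i, Real.exp (-(c i * (Real.exp 1)⁻¹)) ≤ m i ^ (b i) := by
    intro i
    simp only [hm]
    split
    · next _ =>
      rw [Real.one_rpow]
      calc Real.exp (-(c i * (Real.exp 1)⁻¹)) ≤ Real.exp 0 :=
            Real.exp_le_exp.2 (neg_nonpos.2 (mul_nonneg (hc0 i)
              (inv_nonneg.2 (Real.exp_pos 1).le)))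
        _ = 1 := Real.exp_zero
    · next h => exact pow_ge_exp0 (hb i) (lt_of_not_ge h)
  have prodY : 0 ≤ ∏ i, u i (y i) ^ b i :=
    Finset.prod_nonneg fun i _ => Real.rpow_nonneg (huy0 i) _
  have main : Real.exp (-((∑ i, b i) * (Real.exp 1)⁻¹)) * ∏ i, u i (y i) ^ b i
      ≤ ∏ i, u i (x i) ^ b i := by
    have e1 : Real.exp (-((∑ i, b i) * (Real.exp 1)⁻¹)) ≤ ∏ i, m i ^ b i := by
      calc Real.exp (-((∑ i, b i) * (Real.exp 1)⁻¹))
          ≤ Real.exp (-((∑ i, c i) * (Real.exp 1)⁻¹)) := Real.exp_le_exp.2 (by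
            have := mul_le_mul_of_nonneg_right hcB (inv_nonneg.2 (Real.exp_pos 1).le)
            linarith)
        _ = ∏ i, Real.exp (-(c i * (Real.exp 1)⁻¹)) := by
            rw [← Real.exp_sum]
            congr 1
            rw [Finset.sum_mul] at *
            simp [Finset.sum_neg_distrib]
        _ ≤ ∏ i, m i ^ b i := Finset.prod_le_prod
            (fun i _ => (Real.exp_pos _).le) (fun i _ => hexp i)
    calc Real.exp (-((∑ i, b i) * (Real.exp 1)⁻¹)) * ∏ i, u i (y i) ^ b i
        ≤ (∏ i, m i ^ b i) * ∏ i, u i (y i) ^ b i :=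
          mul_le_mul_of_nonneg_right e1 prodY
      _ = ∏ i, (m i ^ b i * u i (y i) ^ b i) := Finset.prod_mul_distrib.symm
      _ = ∏ i, (m i * u i (y i)) ^ b i := Finset.prod_congr rfl fun i _ =>
          (Real.mul_rpow (hm0 i) (huy0 i)).symm
      _ ≤ ∏ i, u i (x i) ^ b i := Finset.prod_le_prod
          (fun i _ => Real.rpow_nonneg (mul_nonneg (hm0 i) (huy0 i)) _)
          (fun i _ => Real.rpow_le_rpow (mul_nonneg (hm0 i) (huy0 i)) (hkey i) (hb i).le)
  rcases isEmpty_or_nonempty A with hA | hA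
  · simp only [Finset.univ_eq_empty, Finset.prod_empty, Finset.sum_empty, inv_zero,
      Real.rpow_zero, mul_one]
    exact Real.rpow_le_one (inv_nonneg.2 (Real.exp_pos 1).le)
      (inv_le_one_of_one_le₀ (Real.one_le_exp (by norm_num))) (inv_nonneg.2 (Real.exp_pos 1).le)
  · have hB : 0 < ∑ i, b i := Finset.sum_pos (fun i _ => hb i) Finset.univ_nonempty
    have h := Real.rpow_le_rpow (mul_nonneg (Real.exp_pos _).le prodY) main
      (inv_nonneg.2 hB.le)
    rw [Real.mul_rpow (Real.exp_pos _).le prodY] at h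
    have hE : (Real.exp (-((∑ i, b i) * (Real.exp 1)⁻¹))) ^ (∑ i, b i)⁻¹
        = (Real.exp 1)⁻¹ ^ (Real.exp 1)⁻¹ := by
      rw [Real.rpow_def_of_pos (Real.exp_pos _), Real.log_exp,
        Real.rpow_def_of_pos (inv_pos.2 (Real.exp_pos 1)), Real.log_inv, Real.log_exp]
      congr 1
      field_simp
    rw [hE] at h
    exact h

end
end

section
/- Let A be a finite set of agents and M a finite set of goods with one unit of each good, where each agent i ∈ A has budget b_i > 0 and a utility function u_i satisfying Assumption (*). Let y be a Nash welfare maximizing allocation with u_i(y_i) > 0 for all i, and let q ∈ dom(φ) be a vector of Gale prices (a minimizer of the dual function φ). Then (y, q) forms a 2-demand-approximate competitive equilibrium: for every agent i, ⟨q, y_i⟩ ≤ b_i and u_i(y_i) ≥ (1/2)·sup{ u_i(x) : x ∈ ℝ≥0^M, ⟨q, x⟩ ≤ b_i }; moreover ∑_{i∈A} y_{ij} ≤ 1 for every good j, with equality whenever q_j > 0. -/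
open scoped BigOperators

noncomputable section

/-- Assumption (*): if `⟨p, x⁽ᵏ⁾⟩ → b` and `u (x⁽ᵏ⁾) → M'`, then the value `M'` is
attained by some bundle within budget `b`. -/
def AssumptionStar {M : Type*} [Fintype M] (u : (M → ℝ) → ℝ) : Prop :=
  ∀ p : M → ℝ, 0 ≤ p → ∀ b : ℝ, 0 < b → ∀ x : ℕ → M → ℝ, (∀ k, 0 ≤ x k) →
    Filter.Tendsto (fun k => dot p (x k)) Filter.atTop (nhds b) →
    ∀ M' : ℝ, Filter.Tendsto (fun k => u (x k)) Filter.atTop (nhds M') →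
    ∃ xs : M → ℝ, 0 ≤ xs ∧ u xs = M' ∧ dot p xs ≤ b

/-- The set of values `b · log u(y) − ⟨q, y⟩` over bundles `y ≥ 0` with `u y > 0`. -/
def galeVals {M : Type*} [Fintype M] (u : (M → ℝ) → ℝ) (q : M → ℝ) (b : ℝ) :
    Set ℝ :=
  (fun y => b * Real.log (u y) - dot q y) '' {y : M → ℝ | 0 ≤ y ∧ 0 < u y}

/-- The Lagrangian dual function of the Eisenberg–Gale program. -/
noncomputable def dualPhi {A M : Type*} [Fintype A] [Fintype M]
    (u : A → (M → ℝ) → ℝ) (b : A → ℝ) (q : M → ℝ) : ℝ :=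
  (∑ i, sSup (galeVals (u i) q (b i))) + ∑ j, q j

/-- The domain of the dual function: prices `q ≥ 0` at which every agent's Gale
value is finite. -/
def dualDom {A M : Type*} [Fintype A] [Fintype M]
    (u : A → (M → ℝ) → ℝ) (b : A → ℝ) : Set (M → ℝ) :=
  {q | 0 ≤ q ∧ ∀ i, BddAbove (galeVals (u i) q (b i))}

namespace NWAux

variable {M : Type*} [Fintype M]

lemma dot_nonneg' (p x : M → ℝ) (hp : 0 ≤ p) (hx : 0 ≤ x) : 0 ≤ dot p x :=
  Finset.sum_nonneg fun j _ => mul_nonneg (hp j) (hx j)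

lemma dot_smul' (p x : M → ℝ) (t : ℝ) : dot p (t • x) = t * dot p x := by
  simp only [dot, Pi.smul_apply, smul_eq_mul, Finset.mul_sum]
  exact Finset.sum_congr rfl fun j _ => by ring

lemma dot_combo (p x x' : M → ℝ) (a c : ℝ) :
    dot p (a • x + c • x') = a * dot p x + c * dot p x' := by
  simp only [dot, Pi.add_apply, Pi.smul_apply, smul_eq_mul, Finset.mul_sum,
    ← Finset.sum_add_distrib]
  exact Finset.sum_congr rfl fun j _ => by ring

lemma utility_scale {u : (M → ℝ) → ℝ} (hu : IsUtility u) {z : M → ℝ} (hz : 0 ≤ z)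
    {t : ℝ} (ht0 : 0 ≤ t) (ht1 : t ≤ 1) : t * u z ≤ u (t • z) := by
  have h := hu.concave.2 (Set.mem_setOf.mpr hz)
    (Set.mem_setOf.mpr (le_refl (0 : M → ℝ))) ht0 (sub_nonneg.2 ht1) (by ring)
  simpa [hu.zero, smul_eq_mul] using h

lemma mem_galeVals {u : (M → ℝ) → ℝ} {q : M → ℝ} {b : ℝ} {z : M → ℝ}
    (hz : 0 ≤ z) (hpos : 0 < u z) :
    b * Real.log (u z) - dot q z ∈ galeVals u q b :=
  ⟨z, ⟨hz, hpos⟩, rfl⟩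

lemma le_of_forall_pos_add_mul_lt {K d c : ℝ} (h : ∀ ε > 0, K + ε * d < c) : K ≤ c := by
  by_contra hc
  push_neg at hc
  have hd : d < 0 := by nlinarith [h 1 one_pos]
  have hε : 0 < (c - K) / d := div_pos_of_neg_of_neg (by linarith) hd
  have h1 := h _ hε
  rw [div_mul_cancel₀ _ (ne_of_lt hd)] at h1
  linarith

lemma nonpos_of_forall_lt {K d c : ℝ} (h : ∀ t > 0, K + t * d < c) : d ≤ 0 := by
  by_contra hd
  push_neg at hd
  have ht : (0 : ℝ) < max 1 ((c - K) / d) := lt_of_lt_of_le one_pos (le_max_left _ _)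
  have h1 := h _ ht
  have h2 : (c - K) / d * d ≤ max 1 ((c - K) / d) * d :=
    mul_le_mul_of_nonneg_right (le_max_right _ _) hd.le
  rw [div_mul_cancel₀ _ (ne_of_gt hd)] at h2
  linarith

lemma combo_pos {a c x x' : ℝ} (ha : 0 ≤ a) (hc : 0 ≤ c) (hac : a + c = 1)
    (hx : 0 < x) (hx' : 0 < x') : 0 < a * x + c * x' := by
  rcases ha.lt_or_eq with h | h
  · exact add_pos_of_pos_of_nonneg (mul_pos h hx) (mul_nonneg hc hx'.le)
  · have hc1 : c = 1 := by linarith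
    rw [← h, hc1]; simpa using hx'

lemma combo_lt {a c x x' X X' : ℝ} (ha : 0 ≤ a) (hc : 0 ≤ c) (hac : a + c = 1)
    (h1 : x < X) (h2 : x' < X') : a * x + c * x' < a * X + c * X' := by
  rcases ha.lt_or_eq with h | h
  · have e1 := mul_lt_mul_of_pos_left h1 h
    have e2 := mul_le_mul_of_nonneg_left h2.le hc
    linarith
  · have hc1 : c = 1 := by linarith
    rw [← h, hc1]; simpa using h2

lemma sub_one_le_mul_log {t : ℝ} (ht : 0 < t) : t - 1 ≤ t * Real.log t := by
  have h := Real.log_le_sub_one_of_pos (inv_pos.2 ht)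
  rw [Real.log_inv] at h
  have h2 := mul_le_mul_of_nonneg_left h ht.le
  have h3 : t * (t⁻¹ - 1) = 1 - t := by field_simp
  rw [h3] at h2
  nlinarith [h2]

end NWAux

open NWAux

set_option maxHeartbeats 1000000 in
/-- A Nash welfare maximizing allocation, with the Gale prices (a minimizer of the
dual function), forms a 2-demand-approximate competitive equilibrium. -/
theorem nash_welfare_two_approx_CE {A M : Type*} [Fintype A] [Fintype M]
    (u : A → (M → ℝ) → ℝ) (hu : ∀ i, IsUtility (u i))
    (hstar : ∀ i, AssumptionStar (u i))
    (b : A → ℝ) (hb : ∀ i, 0 < b i)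
    (y : A → M → ℝ) (hy : MaxNashWelfare u b y) (hypos : ∀ i, 0 < u i (y i))
    (q : M → ℝ) (hq : q ∈ dualDom u b)
    (hqmin : ∀ q' ∈ dualDom u b, dualPhi u b q ≤ dualPhi u b q') :
    (∀ i, dot q (y i) ≤ b i) ∧
    (∀ i, ∀ x : M → ℝ, 0 ≤ x → dot q x ≤ b i → u i x ≤ 2 * u i (y i)) ∧
    (∀ j, ∑ i, y i j ≤ 1) ∧ (∀ j, 0 < q j → ∑ i, y i j = 1) := by
  classical
  obtain ⟨hq0, hqb⟩ := hq
  obtain ⟨hy0, hyfeas, hymax⟩ := hy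
  set N : ℝ := ∑ i, b i * Real.log (u i (y i)) with hN
  set V : (A → M → ℝ) → ℝ := fun z => ∑ i, b i * Real.log (u i (z i)) with hV
  -- primal optimality in log form
  have hprimal : ∀ z : A → M → ℝ, (∀ i, 0 ≤ z i) → (∀ j, ∑ i, z i j ≤ 1) →
      (∀ i, 0 < u i (z i)) → V z ≤ N := by
    intro z hz1 hz2 hz3
    have h := hymax z hz1 hz2
    have hlog := Real.log_le_log
      (Finset.prod_pos fun i _ => Real.rpow_pos_of_pos (hz3 i) _) h
    rw [Real.log_prod (fun i _ => ne_of_gt (Real.rpow_pos_of_pos (hz3 i) _)),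
        Real.log_prod (fun i _ => ne_of_gt (Real.rpow_pos_of_pos (hypos i) _))] at hlog
    simp only [Real.log_rpow (hz3 _), Real.log_rpow (hypos _)] at hlog
    exact hlog
  -- sum swap helper
  have hswap : ∀ (p : M → ℝ) (z : A → M → ℝ),
      ∑ i, dot p (z i) = ∑ j, p j * (∑ i, z i j) := by
    intro p z
    simp only [dot]
    rw [Finset.sum_comm]
    exact Finset.sum_congr rfl fun j _ => (Finset.mul_sum _ _ _).symm
  -- the separation set
  set C : Set ((M → ℝ) × ℝ) :=
    {p | ∃ z : A → M → ℝ, (∀ i, 0 ≤ z i) ∧ (∀ i, 0 < u i (z i)) ∧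
      (∀ j, ∑ i, z i j < p.1 j) ∧ p.2 < V z} with hC
  have hCconv : Convex ℝ C := by
    rintro p ⟨z, hz0, hzpos, hzs, hzr⟩ p' ⟨z', hz0', hzpos', hzs', hzr'⟩ a c ha hc hac
    refine ⟨fun i => a • z i + c • z' i, fun i => ?_, fun i => ?_, fun j => ?_, ?_⟩
    · exact add_nonneg (smul_nonneg ha (hz0 i)) (smul_nonneg hc (hz0' i))
    · have hcomb := (hu i).concave.2 (Set.mem_setOf.mpr (hz0 i))
        (Set.mem_setOf.mpr (hz0' i)) ha hc hac
      simp only [smul_eq_mul] at hcomb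
      exact lt_of_lt_of_le (combo_pos ha hc hac (hzpos i) (hzpos' i)) hcomb
    · have e1 : ∑ i, (a • z i + c • z' i) j = a * (∑ i, z i j) + c * (∑ i, z' i j) := by
        simp only [Pi.add_apply, Pi.smul_apply, smul_eq_mul, Finset.mul_sum,
          ← Finset.sum_add_distrib]
      rw [e1]
      have e2 : (a • p + c • p').1 j = a * p.1 j + c * p'.1 j := rfl
      rw [e2]
      exact combo_lt ha hc hac (hzs j) (hzs' j)
    · have key : ∀ i, a * (b i * Real.log (u i (z i))) + c * (b i * Real.log (u i (z' i)))
          ≤ b i * Real.log (u i (a • z i + c • z' i)) := by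
        intro i
        have hcomb := (hu i).concave.2 (Set.mem_setOf.mpr (hz0 i))
          (Set.mem_setOf.mpr (hz0' i)) ha hc hac
        simp only [smul_eq_mul] at hcomb
        have hpos := combo_pos ha hc hac (hzpos i) (hzpos' i)
        have hl1 : Real.log (a * u i (z i) + c * u i (z' i))
            ≤ Real.log (u i (a • z i + c • z' i)) := Real.log_le_log hpos hcomb
        have hl2 := (strictConcaveOn_log_Ioi.concaveOn).2 (Set.mem_Ioi.mpr (hzpos i))
          (Set.mem_Ioi.mpr (hzpos' i)) ha hc hac
        simp only [smul_eq_mul] at hl2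
        calc a * (b i * Real.log (u i (z i))) + c * (b i * Real.log (u i (z' i)))
            = b i * (a * Real.log (u i (z i)) + c * Real.log (u i (z' i))) := by ring
          _ ≤ b i * Real.log (u i (a • z i + c • z' i)) :=
            mul_le_mul_of_nonneg_left (hl2.trans hl1) (hb i).le
      have hVc : a * V z + c * V z' ≤ V (fun i => a • z i + c • z' i) := by
        simp only [hV, Finset.mul_sum, ← Finset.sum_add_distrib]
        exact Finset.sum_le_sum fun i _ => key i
      have h2 := combo_lt ha hc hac hzr hzr'
      have hsnd : (a • p + c • p').2 = a * p.2 + c * p'.2 := rfl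
      rw [hsnd]
      exact lt_of_lt_of_le h2 hVc
  have hCopen : IsOpen C := by
    rw [isOpen_iff_mem_nhds]
    rintro p ⟨z, hz0, hzpos, hzs, hzr⟩
    have hopen : IsOpen ({p' : (M → ℝ) × ℝ | ∀ j, ∑ i, z i j < p'.1 j}
        ∩ {p' : (M → ℝ) × ℝ | p'.2 < V z}) := by
      apply IsOpen.inter
      · have e : {p' : (M → ℝ) × ℝ | ∀ j, ∑ i, z i j < p'.1 j}
            = ⋂ j, {p' : (M → ℝ) × ℝ | ∑ i, z i j < p'.1 j} := by
          ext p'; simp [Set.mem_iInter]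
        rw [e]
        exact isOpen_iInter_of_finite fun j =>
          isOpen_lt continuous_const ((continuous_apply j).comp continuous_fst)
      · exact isOpen_lt continuous_snd continuous_const
    exact Filter.mem_of_superset (hopen.mem_nhds ⟨hzs, hzr⟩)
      (fun p' hp' => ⟨z, hz0, hzpos, hp'.1, hp'.2⟩)
  have hx0 : (((fun _ => 1) : M → ℝ), N) ∉ C := by
    rintro ⟨z, hz0, hzpos, hzs, hzr⟩
    exact absurd (hprimal z hz0 (fun j => (hzs j).le) hzpos) (not_le.mpr hzr)
  obtain ⟨f, hf⟩ := geometric_hahn_banach_open_point hCconv hCopen hx0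
  set lam : M → ℝ := fun j => f (Pi.single j 1, 0) with hlam
  set mu : ℝ := f (0, 1) with hmu
  have hdecomp : ∀ (s : M → ℝ) (r : ℝ), f (s, r) = (∑ j, s j * lam j) + r * mu := by
    intro s r
    have e1 : ((s, r) : (M → ℝ) × ℝ)
        = (∑ j, (s j) • (((Pi.single j 1 : M → ℝ), (0 : ℝ)) : (M → ℝ) × ℝ))
          + r • (((0 : M → ℝ), (1 : ℝ)) : (M → ℝ) × ℝ) := by
      have hfst : ∑ j, (s j) • ((Pi.single j (1 : ℝ) : M → ℝ)) = s := by
        funext x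
        rw [Finset.sum_apply]
        simp [Pi.single_apply]
      apply Prod.ext
      · simp [Prod.fst_sum, hfst]
      · simp [Prod.snd_sum]
    rw [e1, map_add, map_sum]
    simp only [map_smul, smul_eq_mul]
    try rfl
  have hfx : f (((fun _ => 1) : M → ℝ), N) = (∑ j, lam j) + N * mu := by
    rw [hdecomp]
    simp
  -- Slater point
  set z0 : A → M → ℝ := fun i => (1 / 2 : ℝ) • y i with hz0def
  have hz00 : ∀ i, 0 ≤ z0 i := fun i => smul_nonneg (by norm_num) (hy0 i)
  have hz0pos : ∀ i, 0 < u i (z0 i) := fun i =>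
    lt_of_lt_of_le (by linarith [hypos i]) (utility_scale (hu i) (hy0 i) (by norm_num) (by norm_num))
  have hz0sum : ∀ j, ∑ i, z0 i j ≤ 1 / 2 := by
    intro j
    have e : ∑ i, z0 i j = (1 / 2) * ∑ i, y i j := by
      simp only [hz0def, Pi.smul_apply, smul_eq_mul, Finset.mul_sum]
    rw [e]; linarith [hyfeas j]
  -- generic members of C
  have hmemC : ∀ z : A → M → ℝ, (∀ i, 0 ≤ z i) → (∀ i, 0 < u i (z i)) →
      ∀ s : M → ℝ, (∀ j, ∑ i, z i j < s j) → ∀ r : ℝ, r < V z → ((s, r) : (M → ℝ) × ℝ) ∈ C :=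
    fun z h1 h2 s hs r hr => ⟨z, h1, h2, hs, hr⟩
  -- lam ≤ 0
  have hlamnp : ∀ j, lam j ≤ 0 := by
    intro j
    apply nonpos_of_forall_lt (K := (∑ j', lam j') + (V z0 - 1) * mu)
      (c := (∑ j', lam j') + N * mu)
    intro t ht
    have hmem : (((fun j' => 1 + t * (Pi.single j (1:ℝ) : M → ℝ) j') : M → ℝ), V z0 - 1) ∈ C := by
      apply hmemC z0 hz00 hz0pos
      · intro j'
        have h1 := hz0sum j'
        have h2 : 0 ≤ t * (Pi.single j (1:ℝ) : M → ℝ) j' := by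
          apply mul_nonneg ht.le
          rcases eq_or_ne j' j with rfl | hne
          · simp
          · simp [Pi.single_apply, hne]
        linarith
      · linarith
    have hlt := hf _ hmem
    rw [hdecomp, hfx] at hlt
    have e : ∑ j', (1 + t * (Pi.single j (1:ℝ) : M → ℝ) j') * lam j'
        = (∑ j', lam j') + t * lam j := by
      have e2 : ∀ j', (1 + t * (Pi.single j (1:ℝ) : M → ℝ) j') * lam j'
          = lam j' + t * ((Pi.single j (1:ℝ) : M → ℝ) j' * lam j') := fun j' => by ring
      rw [Finset.sum_congr rfl fun j' _ => e2 j', Finset.sum_add_distrib, ← Finset.mul_sum]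
      congr 1
      congr 1
      rw [Finset.sum_eq_single j]
      · simp
      · intro j' _ hne
        simp [Pi.single_apply, hne]
      · intro h; exact absurd (Finset.mem_univ j) h
    rw [e] at hlt
    linarith
  -- mu ≥ 0
  have hmunn : 0 ≤ mu := by
    have h := nonpos_of_forall_lt (K := (∑ j', lam j') + V z0 * mu)
      (c := (∑ j', lam j') + N * mu) (d := -mu) ?_
    · linarith
    intro t ht
    have hmem : ((((fun _ => 1) : M → ℝ), V z0 - t) : (M → ℝ) × ℝ) ∈ C := by
      apply hmemC z0 hz00 hz0pos
      · intro j'; linarith [hz0sum j']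
      · linarith
    have hlt := hf _ hmem
    rw [hdecomp, hfx] at hlt
    simp only [one_mul] at hlt
    nlinarith [hlt]
  -- mu > 0
  have hmupos : 0 < mu := by
    rcases hmunn.lt_or_eq with h | h
    · exact h
    exfalso
    have hmem : ((((fun _ => (3:ℝ)/4) : M → ℝ), V z0 - 1) : (M → ℝ) × ℝ) ∈ C := by
      apply hmemC z0 hz00 hz0pos
      · intro j'; linarith [hz0sum j']
      · linarith
    have hlt := hf _ hmem
    rw [hdecomp, hfx, ← h] at hlt
    have e : ∑ j', (3:ℝ)/4 * lam j' = (3:ℝ)/4 * ∑ j', lam j' := by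
      rw [Finset.mul_sum]
    rw [e] at hlt
    have hsl : ∑ j', lam j' ≤ 0 := Finset.sum_nonpos fun j' _ => hlamnp j'
    nlinarith [hlt, hsl]
  -- the candidate dual prices
  set q' : M → ℝ := fun j => -lam j / mu with hq'def
  have hq'0 : 0 ≤ q' := fun j => div_nonneg (neg_nonneg.2 (hlamnp j)) hmupos.le
  have hlamq : ∀ j, lam j = -(mu * q' j) := by
    intro j
    rw [hq'def]
    field_simp
  -- the key inequality
  have hkey : ∀ z : A → M → ℝ, (∀ i, 0 ≤ z i) → (∀ i, 0 < u i (z i)) →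
      ∑ i, (b i * Real.log (u i (z i)) - dot q' (z i)) ≤ N - ∑ j, q' j := by
    intro z h1 h2
    have hK : (∑ j, (∑ i, z i j) * lam j) + V z * mu ≤ (∑ j, lam j) + N * mu := by
      apply le_of_forall_pos_add_mul_lt (d := (∑ j, lam j) - mu)
      intro ε hε
      have hmem : (((fun j => (∑ i, z i j) + ε) : M → ℝ), V z - ε) ∈ C := by
        apply hmemC z h1 h2
        · intro j; linarith
        · linarith
      have hlt := hf _ hmem
      rw [hdecomp, hfx] at hlt
      have e : ∑ j, ((∑ i, z i j) + ε) * lam j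
          = (∑ j, (∑ i, z i j) * lam j) + ε * ∑ j, lam j := by
        rw [Finset.mul_sum, ← Finset.sum_add_distrib]
        exact Finset.sum_congr rfl fun j _ => by ring
      rw [e] at hlt
      nlinarith [hlt]
    have e1 : ∑ j, (∑ i, z i j) * lam j = -(mu * ∑ j, q' j * (∑ i, z i j)) := by
      rw [Finset.mul_sum, ← Finset.sum_neg_distrib]
      exact Finset.sum_congr rfl fun j _ => by rw [hlamq j]; ring
    have e2 : ∑ j, lam j = -(mu * ∑ j, q' j) := by
      rw [Finset.mul_sum, ← Finset.sum_neg_distrib]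
      exact Finset.sum_congr rfl fun j _ => by rw [hlamq j]
    rw [e1, e2] at hK
    have hdiv : V z - ∑ j, q' j * (∑ i, z i j) ≤ N - ∑ j, q' j := by
      have hmul : mu * (V z - ∑ j, q' j * (∑ i, z i j)) ≤ mu * (N - ∑ j, q' j) := by
        nlinarith [hK]
      exact le_of_mul_le_mul_left hmul hmupos
    rw [Finset.sum_sub_distrib, hswap q' z]
    exact hdiv
  -- q' is in the dual domain
  have hq'dom : q' ∈ dualDom u b := by
    refine ⟨hq'0, fun i => ?_⟩
    refine ⟨(N - ∑ j, q' j) - ∑ k ∈ Finset.univ.erase i,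
      (b k * Real.log (u k (y k)) - dot q' (y k)), ?_⟩
    rintro v ⟨x, ⟨hx0, hxpos⟩, rfl⟩
    have h := hkey (Function.update y i x) ?_ ?_
    · rw [← Finset.add_sum_erase _ _ (Finset.mem_univ i)] at h
      have e : ∀ k ∈ Finset.univ.erase i,
          (b k * Real.log (u k (Function.update y i x k)) - dot q' (Function.update y i x k))
          = b k * Real.log (u k (y k)) - dot q' (y k) := by
        intro k hk
        rw [Function.update_of_ne (Finset.ne_of_mem_erase hk)]
      rw [Finset.sum_congr rfl e, Function.update_self] at h
      simp only
      linarith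
    · intro k
      rcases eq_or_ne k i with rfl | hne
      · rw [Function.update_self]; exact hx0
      · rw [Function.update_of_ne hne]; exact hy0 k
    · intro k
      rcases eq_or_ne k i with rfl | hne
      · rw [Function.update_self]; exact hxpos
      · rw [Function.update_of_ne hne]; exact hypos k
  -- sum of suprema bounded
  have hsupsum : ∑ i, sSup (galeVals (u i) q' (b i)) ≤ N - ∑ j, q' j := by
    by_contra hcon
    push_neg at hcon
    set S := ∑ i, sSup (galeVals (u i) q' (b i)) with hS
    set C0 := N - ∑ j, q' j with hC0
    set ε := (S - C0) / (Fintype.card A + 1) with hεdef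
    have hε : 0 < ε := div_pos (by linarith) (by positivity)
    have hch : ∀ i : A, ∃ x : M → ℝ, (0 ≤ x ∧ 0 < u i x) ∧
        sSup (galeVals (u i) q' (b i)) - ε < b i * Real.log (u i x) - dot q' x := by
      intro i
      obtain ⟨v, ⟨x, hx, rfl⟩, hv⟩ := exists_lt_of_lt_csSup
        ⟨_, mem_galeVals (hy0 i) (hypos i)⟩ (sub_lt_self _ hε)
      exact ⟨x, hx, hv⟩
    choose zc hzc1 hzc2 using hch
    have h1 := hkey zc (fun i => (hzc1 i).1) (fun i => (hzc1 i).2)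
    have h2 : S - Fintype.card A * ε ≤ ∑ i, (b i * Real.log (u i (zc i)) - dot q' (zc i)) := by
      have h3 := Finset.sum_le_sum (fun i (_ : i ∈ Finset.univ) => (hzc2 i).le)
      rw [Finset.sum_sub_distrib, Finset.sum_const, Finset.card_univ, nsmul_eq_mul] at h3
      exact h3
    have h4 : ((Fintype.card A : ℝ) + 1) * ε = S - C0 := by
      rw [hεdef]; field_simp
    nlinarith [h1, h2, h4, hε]
  have hphiq' : dualPhi u b q' ≤ N := by
    rw [dualPhi]; linarith
  have hstrong : dualPhi u b q ≤ N := le_trans (hqmin q' hq'dom) hphiq'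
  -- weak duality
  have hsup_ge : ∀ i, b i * Real.log (u i (y i)) - dot q (y i)
      ≤ sSup (galeVals (u i) q (b i)) :=
    fun i => le_csSup (hqb i) (mem_galeVals (hy0 i) (hypos i))
  have hweak : N ≤ dualPhi u b q := by
    have h2 : ∑ i, dot q (y i) ≤ ∑ j, q j := by
      rw [hswap q y]
      apply Finset.sum_le_sum
      intro j _
      calc q j * (∑ i, y i j) ≤ q j * 1 := mul_le_mul_of_nonneg_left (hyfeas j) (hq0 j)
        _ = q j := mul_one _
    have h3 := Finset.sum_le_sum (fun i (_ : i ∈ Finset.univ) => hsup_ge i)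
    rw [Finset.sum_sub_distrib] at h3
    rw [dualPhi]
    linarith
  have heq : dualPhi u b q = N := le_antisymm hstrong hweak
  -- complementary slackness
  have hD : ∀ i, 0 ≤ sSup (galeVals (u i) q (b i))
      - (b i * Real.log (u i (y i)) - dot q (y i)) := fun i => sub_nonneg.2 (hsup_ge i)
  have hE : ∀ j, 0 ≤ q j * (1 - ∑ i, y i j) :=
    fun j => mul_nonneg (hq0 j) (by linarith [hyfeas j])
  have hsum0 : (∑ i, (sSup (galeVals (u i) q (b i))
      - (b i * Real.log (u i (y i)) - dot q (y i))))
      + (∑ j, q j * (1 - ∑ i, y i j)) = 0 := by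
    have e1 : ∑ i, (sSup (galeVals (u i) q (b i))
        - (b i * Real.log (u i (y i)) - dot q (y i)))
        = (∑ i, sSup (galeVals (u i) q (b i))) - N + ∑ i, dot q (y i) := by
      rw [Finset.sum_sub_distrib, Finset.sum_sub_distrib]
      ring
    have e2 : ∑ j, q j * (1 - ∑ i, y i j) = (∑ j, q j) - ∑ i, dot q (y i) := by
      rw [hswap q y, ← Finset.sum_sub_distrib]
      exact Finset.sum_congr rfl fun j _ => by ring
    rw [e1, e2]
    rw [dualPhi] at heq
    linarith
  have hDsum0 : ∑ i, (sSup (galeVals (u i) q (b i))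
      - (b i * Real.log (u i (y i)) - dot q (y i))) = 0 := by
    have hDs := Finset.sum_nonneg (fun i (_ : i ∈ Finset.univ) => hD i)
    have hEs := Finset.sum_nonneg (fun j (_ : j ∈ Finset.univ) => hE j)
    linarith
  have hEsum0 : ∑ j, q j * (1 - ∑ i, y i j) = 0 := by
    have hDs := Finset.sum_nonneg (fun i (_ : i ∈ Finset.univ) => hD i)
    linarith
  have hattain : ∀ i, sSup (galeVals (u i) q (b i))
      = b i * Real.log (u i (y i)) - dot q (y i) := by
    intro i
    have h := (Finset.sum_eq_zero_iff_of_nonneg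
      (fun i (_ : i ∈ Finset.univ) => hD i)).1 hDsum0 i (Finset.mem_univ i)
    linarith
  have hslack : ∀ j, q j * (1 - ∑ i, y i j) = 0 := fun j =>
    (Finset.sum_eq_zero_iff_of_nonneg
      (fun j (_ : j ∈ Finset.univ) => hE j)).1 hEsum0 j (Finset.mem_univ j)
  -- conclusion 1: budgets
  have hbudget : ∀ i, dot q (y i) ≤ b i := by
    intro i
    by_contra hcon
    push_neg at hcon
    set cqy := dot q (y i) with hcqy
    have hcpos : 0 < cqy := lt_trans (hb i) hcon
    set t := (b i / cqy + 1) / 2 with htdef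
    have ht1 : b i / cqy < 1 := (div_lt_one hcpos).2 hcon
    have ht0' : 0 < b i / cqy := div_pos (hb i) hcpos
    have ht0 : 0 < t := by rw [htdef]; linarith
    have htlt1 : t < 1 := by rw [htdef]; linarith
    have htgt : b i / cqy < t := by rw [htdef]; linarith
    have hscale := utility_scale (hu i) (hy0 i) ht0.le htlt1.le
    have humem : 0 < u i (t • y i) := lt_of_lt_of_le (mul_pos ht0 (hypos i)) hscale
    have hle : b i * Real.log (u i (t • y i)) - dot q (t • y i)
        ≤ b i * Real.log (u i (y i)) - cqy := by
      rw [hcqy, ← hattain i]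
      exact le_csSup (hqb i) (mem_galeVals (smul_nonneg ht0.le (hy0 i)) humem)
    rw [dot_smul'] at hle
    have hlog : Real.log t + Real.log (u i (y i)) ≤ Real.log (u i (t • y i)) := by
      rw [← Real.log_mul (ne_of_gt ht0) (ne_of_gt (hypos i))]
      exact Real.log_le_log (mul_pos ht0 (hypos i)) hscale
    have hkey2 : b i * Real.log t ≤ (t - 1) * cqy := by
      nlinarith [mul_le_mul_of_nonneg_left hlog (hb i).le, hle]
    have htlogt : t - 1 ≤ t * Real.log t := sub_one_le_mul_log ht0
    have h6 : b i < t * cqy := by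
      have h6' := mul_lt_mul_of_pos_right htgt hcpos
      rwa [div_mul_cancel₀ _ (ne_of_gt hcpos)] at h6'
    have m1 : b i * (t - 1) ≤ b i * (t * Real.log t) :=
      mul_le_mul_of_nonneg_left htlogt (hb i).le
    have m2 : t * (b i * Real.log t) ≤ t * ((t - 1) * cqy) :=
      mul_le_mul_of_nonneg_left hkey2 ht0.le
    have m3 : b i * (t - 1) ≤ t * ((t - 1) * cqy) := by nlinarith [m1, m2]
    nlinarith [m3, mul_pos (sub_pos.2 htlt1) (sub_pos.2 h6)]
  -- conclusion 2: 2-approximate demand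
  have happrox : ∀ i, ∀ x : M → ℝ, 0 ≤ x → dot q x ≤ b i → u i x ≤ 2 * u i (y i) := by
    intro i x hx0 hxb
    by_contra hcon
    push_neg at hcon
    set w := u i (y i) with hw0
    set v := u i x with hv0
    have hw : 0 < w := hypos i
    have hv : 2 * w < v := hcon
    set s := v / w - 1 with hsdef
    have hs : 1 < s := by
      rw [hsdef, lt_sub_iff_add_lt]
      rw [lt_div_iff₀ hw]
      linarith
    have hs0 : 0 < s := by linarith
    set lam2 := (s - 1) / (2 * s) with hldef
    have hl0 : 0 < lam2 := div_pos (by linarith) (by linarith)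
    have hl1 : lam2 < 1 := by
      rw [hldef, div_lt_one (by linarith)]
      linarith
    have hl2s : lam2 * (2 * s) = s - 1 := by
      rw [hldef]; field_simp
    set z := (1 - lam2) • y i + lam2 • x with hzdef
    have hz0 : 0 ≤ z := by
      intro j
      simp only [hzdef, Pi.add_apply, Pi.smul_apply, smul_eq_mul]
      have := hy0 i j
      have := hx0 j
      nlinarith
    have hcomb := (hu i).concave.2 (Set.mem_setOf.mpr (hy0 i)) (Set.mem_setOf.mpr hx0)
      (by linarith : (0:ℝ) ≤ 1 - lam2) hl0.le (by ring)
    simp only [smul_eq_mul] at hcomb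
    set ρ := 1 + lam2 * s with hρdef
    have hρ1 : 1 < ρ := by rw [hρdef]; nlinarith
    have hρ0 : 0 < ρ := by linarith
    have hwρ : w * ρ ≤ u i z := by
      have e : (1 - lam2) * w + lam2 * v = w * ρ := by
        rw [hρdef, hsdef]
        field_simp
        ring
      rw [hzdef]
      calc w * ρ = (1 - lam2) * w + lam2 * v := e.symm
        _ ≤ _ := hcomb
    have huz : 0 < u i z := lt_of_lt_of_le (by positivity) hwρ
    have hle2 : b i * Real.log (u i z) - dot q z
        ≤ b i * Real.log w - dot q (y i) := by
      rw [hw0, ← hattain i]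
      exact le_csSup (hqb i) (mem_galeVals hz0 huz)
    have hdotz : dot q z = (1 - lam2) * dot q (y i) + lam2 * dot q x := by
      rw [hzdef]; exact dot_combo q (y i) x (1 - lam2) lam2
    have hdotqy : 0 ≤ dot q (y i) := dot_nonneg' _ _ hq0 (hy0 i)
    have hlogz : Real.log w + Real.log ρ ≤ Real.log (u i z) := by
      rw [← Real.log_mul (ne_of_gt hw) (ne_of_gt hρ0)]
      exact Real.log_le_log (by positivity) hwρ
    have h9 : dot q z - dot q (y i) ≤ lam2 * b i := by
      rw [hdotz]
      nlinarith [mul_le_mul_of_nonneg_left hxb hl0.le, mul_nonneg hl0.le hdotqy]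
    have h8 : b i * Real.log ρ ≤ b i * lam2 := by
      nlinarith [mul_le_mul_of_nonneg_left hlogz (hb i).le, hle2, h9]
    have hlogρ : Real.log ρ ≤ lam2 := le_of_mul_le_mul_left h8 (hb i)
    have hA : ρ - 1 ≤ ρ * Real.log ρ := sub_one_le_mul_log hρ0
    have hA' : ρ - 1 ≤ ρ * lam2 :=
      le_trans hA (mul_le_mul_of_nonneg_left hlogρ hρ0.le)
    rw [hρdef] at hA'
    nlinarith [hA', hl2s, hl0, hs, mul_pos hl0 hs0]
  -- conclusion 4
  have hfull : ∀ j, 0 < q j → ∑ i, y i j = 1 := by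
    intro j hj
    rcases mul_eq_zero.1 (hslack j) with h | h
    · exact absurd h (ne_of_gt hj)
    · linarith
  exact ⟨hbudget, happrox, hyfeas, hfull⟩

end
end

section
/- Let A be a finite set of agents and M a finite set of goods with one unit of each good, where every agent has the same budget b > 0 and a utility function u_i satisfying Assumption (*). If y is a Nash welfare maximizing allocation with u_i(y_i) > 0 for all i, then y is 2-envy-free: for all agents i, k ∈ A, u_i(y_i) ≥ (1/2)·u_i(y_k). -/
open scoped BigOperators

noncomputable section

set_option maxHeartbeats 1000000 in
/-- With identical budgets, any Nash welfare maximizing allocation is 2-envy-free: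
`u i (y i) ≥ (1/2) · u i (y k)` for all agents `i, k`. -/
theorem nash_welfare_two_envy_free {A M : Type*} [Fintype A] [Fintype M]
    (u : A → (M → ℝ) → ℝ) (hu : ∀ i, IsUtility (u i))
    (hstar : ∀ i, AssumptionStar (u i))
    (b : ℝ) (hb : 0 < b)
    (y : A → M → ℝ) (hy : MaxNashWelfare u (fun _ => b) y)
    (hypos : ∀ i, 0 < u i (y i)) :
    ∀ i k, u i (y k) ≤ 2 * u i (y i) := by
  classical
  obtain ⟨hy0, hyfeas, hmax⟩ := hy
  intro i k
  by_contra hcon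
  push_neg at hcon
  set a := u i (y i) with ha
  set c := u i (y k) with hc
  have hapos : 0 < a := hypos i
  have hik : i ≠ k := by
    rintro rfl
    have hca' : c = a := by rw [hc, ha]
    nlinarith
  set ε : ℝ := (c - 2*a)/(2*(c-a)) with hε
  have hca : 0 < c - a := by nlinarith
  have hc2a : 0 < c - 2*a := by nlinarith
  have hε0 : 0 < ε := by positivity
  have hε1 : ε < 1 := by
    rw [hε, div_lt_one (by nlinarith)]
    nlinarith
  have hεd : ε * (c - a) = (c - 2*a)/2 := by
    rw [hε]; field_simp
  -- the improved allocation
  set z : A → M → ℝ := fun l => if l = i then y i + ε • y k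
    else if l = k then (1-ε) • y k else y l with hz
  have hzi : z i = y i + ε • y k := by simp [hz]
  have hzk : z k = (1-ε) • y k := by simp [hz, hik.symm]
  have hzo : ∀ l, l ≠ i → l ≠ k → z l = y l := by
    intro l h1 h2; simp [hz, h1, h2]
  have hz0 : ∀ l, 0 ≤ z l := by
    intro l j
    have h1 := hy0 l j
    have h2 := hy0 k j
    have h3 := hy0 i j
    simp only [Pi.zero_apply] at h1 h2 h3 ⊢
    by_cases hli : l = i
    · rw [hli, hzi]
      simp only [Pi.add_apply, Pi.smul_apply, smul_eq_mul]
      nlinarith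
    by_cases hlk : l = k
    · rw [hlk, hzk]
      simp only [Pi.smul_apply, smul_eq_mul]
      nlinarith
    · rw [hzo l hli hlk]; exact h1
  have hzfeas : ∀ j, ∑ l, z l j ≤ 1 := by
    intro j
    have hkmem : k ∈ Finset.univ.erase i := by
      simp [hik.symm]
    have hsum : ∑ l, z l j = ∑ l, y l j := by
      rw [← Finset.add_sum_erase _ (fun l => z l j) (Finset.mem_univ i),
          ← Finset.add_sum_erase _ (fun l => y l j) (Finset.mem_univ i),
          ← Finset.add_sum_erase _ (fun l => z l j) hkmem,
          ← Finset.add_sum_erase _ (fun l => y l j) hkmem]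
      have htail : ∑ l ∈ (Finset.univ.erase i).erase k, z l j
          = ∑ l ∈ (Finset.univ.erase i).erase k, y l j := by
        apply Finset.sum_congr rfl
        intro l hl
        rw [Finset.mem_erase, Finset.mem_erase] at hl
        rw [hzo l hl.2.1 hl.1]
      rw [htail, hzi, hzk]
      simp only [Pi.add_apply, Pi.smul_apply, smul_eq_mul]
      ring
    rw [hsum]; exact hyfeas j
  -- utility bounds
  have hconci := (hu i).concave
  have hmemyi : y i ∈ {x : M → ℝ | 0 ≤ x} := hy0 i
  have hmemyk : y k ∈ {x : M → ℝ | 0 ≤ x} := hy0 k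
  have hmix : (1-ε) * a + ε * c ≤ u i ((1-ε) • y i + ε • y k) := by
    have := hconci.2 hmemyi hmemyk (by linarith : (0:ℝ) ≤ 1-ε) (le_of_lt hε0)
      (by ring)
    simpa [smul_eq_mul] using this
  have hzi_ge : (1-ε) * a + ε * c ≤ u i (z i) := by
    refine hmix.trans ((hu i).mono ?_ ?_)
    · intro j
      have h1 := hy0 i j; have h2 := hy0 k j
      simp only [Pi.zero_apply] at h1 h2 ⊢
      simp only [Pi.add_apply, Pi.smul_apply, smul_eq_mul]
      nlinarith
    · intro j
      rw [hzi]
      have h1 := hy0 i j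
      simp only [Pi.zero_apply] at h1
      simp only [Pi.add_apply, Pi.smul_apply, smul_eq_mul]
      nlinarith
  have hmemz : (0:M → ℝ) ∈ {x : M → ℝ | 0 ≤ x} := by
    simp only [Set.mem_setOf_eq]; exact le_refl _
  have hzk_ge : (1-ε) * u k (y k) ≤ u k (z k) := by
    have h2 := (hu k).concave.2 hmemyk hmemz (by linarith : (0:ℝ) ≤ 1-ε)
      (le_of_lt hε0) (by ring)
    rw [hzk]
    have heq : (1-ε) • y k + ε • (0:M → ℝ) = (1-ε) • y k := by simp
    rw [heq] at h2
    simpa [(hu k).zero, smul_eq_mul] using h2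
  -- derive contradiction with maximality
  have hle := hmax z hz0 hzfeas
  have hwpos : 0 < u k (y k) := hypos k
  -- show strict improvement
  have hkey : a * u k (y k) < ((1-ε)*a + ε*c) * ((1-ε) * u k (y k)) := by
    have h1 : a < (1-ε) * ((1-ε)*a + ε*c) := by
      nlinarith [hεd, sq_nonneg ε, mul_pos hε0 hc2a]
    nlinarith
  have hzipos : 0 < u i (z i) := lt_of_lt_of_le (by nlinarith) hzi_ge
  have hzkpos : 0 < u k (z k) := lt_of_lt_of_le (by nlinarith) hzk_ge
  have hlt : ∏ l, (u l (y l)) ^ b < ∏ l, (u l (z l)) ^ b := by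
    have hkmem : k ∈ Finset.univ.erase i := by simp [hik.symm]
    rw [← Finset.mul_prod_erase _ (fun l => (u l (z l))^b) (Finset.mem_univ i),
        ← Finset.mul_prod_erase _ (fun l => (u l (y l))^b) (Finset.mem_univ i),
        ← Finset.mul_prod_erase _ (fun l => (u l (z l))^b) hkmem,
        ← Finset.mul_prod_erase _ (fun l => (u l (y l))^b) hkmem]
    have htail : ∏ l ∈ (Finset.univ.erase i).erase k, (u l (z l))^b
        = ∏ l ∈ (Finset.univ.erase i).erase k, (u l (y l))^b := by
      apply Finset.prod_congr rfl
      intro l hl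
      rw [Finset.mem_erase, Finset.mem_erase] at hl
      rw [hzo l hl.2.1 hl.1]
    rw [htail]
    have hP : 0 < ∏ l ∈ (Finset.univ.erase i).erase k, (u l (y l))^b := by
      apply Finset.prod_pos
      intro l _
      exact Real.rpow_pos_of_pos (hypos l) b
    have hhead : (u i (y i))^b * (u k (y k))^b < (u i (z i))^b * (u k (z k))^b := by
      calc (u i (y i))^b * (u k (y k))^b
          = (a * u k (y k))^b := by rw [← Real.mul_rpow (le_of_lt hapos) (le_of_lt hwpos)]
        _ < (((1-ε)*a + ε*c) * ((1-ε) * u k (y k)))^b :=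
            Real.rpow_lt_rpow (by positivity) hkey hb
        _ = ((1-ε)*a + ε*c)^b * ((1-ε) * u k (y k))^b := by
            rw [Real.mul_rpow (by nlinarith) (by nlinarith)]
        _ ≤ (u i (z i))^b * (u k (z k))^b := by
            apply mul_le_mul
            · exact Real.rpow_le_rpow (by nlinarith) hzi_ge hb.le
            · exact Real.rpow_le_rpow (by nlinarith) hzk_ge hb.le
            · exact Real.rpow_nonneg (by nlinarith) b
            · exact Real.rpow_nonneg hzipos.le b
    calc (u i (y i))^b * ((u k (y k))^b * ∏ l ∈ (Finset.univ.erase i).erase k, (u l (y l))^b)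
        = ((u i (y i))^b * (u k (y k))^b) * ∏ l ∈ (Finset.univ.erase i).erase k, (u l (y l))^b := by ring
      _ < ((u i (z i))^b * (u k (z k))^b) * ∏ l ∈ (Finset.univ.erase i).erase k, (u l (y l))^b :=
          mul_lt_mul_of_pos_right hhead hP
      _ = (u i (z i))^b * ((u k (z k))^b * ∏ l ∈ (Finset.univ.erase i).erase k, (u l (y l))^b) := by ring
  exact absurd hle (not_le.mpr hlt)

end
end

section
/- Let u be any utility function on a finite set M of goods, b > 0 and q ∈ ℝ≥0^M. For any y ∈ ℝ≥0^M with u(y) > 0 and ⟨q, y⟩ > b, the point y' = (b/⟨q,y⟩)·y satisfies ⟨q, y'⟩ ≤ b and b·log u(y') − ⟨q, y'⟩ > b·log u(y) − ⟨q, y⟩. In particular, every y ∈ G^u(q,b) satisfies ⟨q, y⟩ ≤ b. -/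
open scoped BigOperators

noncomputable section

/-- The Gale demand correspondence `G^u(q,b)`. -/
def GaleDemand {M : Type*} [Fintype M] (u : (M → ℝ) → ℝ) (q : M → ℝ) (b : ℝ) :
    Set (M → ℝ) :=
  {y | 0 ≤ y ∧ 0 < u y ∧ ∀ z : M → ℝ, 0 ≤ z → 0 < u z →
    b * Real.log (u z) - dot q z ≤ b * Real.log (u y) - dot q y}

/-- For any bundle exceeding the budget, scaling it back to the budget strictly
improves the Gale objective; in particular every Gale demand is within budget. -/
theorem gale_demand_within_budget {M : Type*} [Fintype M]
    (u : (M → ℝ) → ℝ) (hu : IsUtility u) (b : ℝ) (hb : 0 < b)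
    (q : M → ℝ) (hq : 0 ≤ q) :
    (∀ y : M → ℝ, 0 ≤ y → 0 < u y → b < dot q y →
      dot q ((b / dot q y) • y) ≤ b ∧
      b * Real.log (u y) - dot q y <
        b * Real.log (u ((b / dot q y) • y)) - dot q ((b / dot q y) • y)) ∧
    ∀ y ∈ GaleDemand u q b, dot q y ≤ b := by
  have main : ∀ y : M → ℝ, 0 ≤ y → 0 < u y → b < dot q y →
      dot q ((b / dot q y) • y) ≤ b ∧
      b * Real.log (u y) - dot q y <
        b * Real.log (u ((b / dot q y) • y)) - dot q ((b / dot q y) • y) := by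
    intro y hy huy hby
    set s := dot q y with hs
    have hs0 : 0 < s := hb.trans hby
    set t := b / s with ht
    have ht0 : 0 < t := div_pos hb hs0
    have ht1 : t < 1 := (div_lt_one hs0).mpr hby
    have hdot : dot q (t • y) = t * s := by
      simp [dot, hs, Finset.mul_sum, Pi.smul_apply, smul_eq_mul]
      ring_nf
      congr 1
      ext j
      ring
    have hts : t * s = b := div_mul_cancel₀ b hs0.ne'
    have hdotb : dot q (t • y) = b := by rw [hdot, hts]
    refine ⟨le_of_eq hdotb, ?_⟩
    have hyS : y ∈ {x : M → ℝ | 0 ≤ x} := hy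
    have h0S : (0 : M → ℝ) ∈ {x : M → ℝ | 0 ≤ x} := by
      simp [Set.mem_setOf_eq, le_refl]
    have hcc := hu.concave.2 hyS h0S ht0.le (by linarith : (0:ℝ) ≤ 1 - t)
      (by ring : t + (1 - t) = 1)
    have hty : t • y + (1 - t) • (0 : M → ℝ) = t • y := by simp
    rw [hty, hu.zero] at hcc
    have hu' : t * u y ≤ u (t • y) := by simpa [smul_eq_mul] using hcc
    have hupos : 0 < u (t • y) := lt_of_lt_of_le (mul_pos ht0 huy) hu'
    have hlog : Real.log t + Real.log (u y) ≤ Real.log (u (t • y)) := by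
      have := Real.log_le_log (mul_pos ht0 huy) hu'
      rwa [Real.log_mul ht0.ne' huy.ne'] at this
    have hkey : Real.log t > 1 - 1 / t := by
      have hne : (1:ℝ)/t ≠ 1 := by
        intro h
        have : t = 1 := by field_simp at h; linarith
        linarith
      have h := Real.log_lt_sub_one_of_pos (by positivity : (0:ℝ) < 1/t) hne
      rw [Real.log_div one_ne_zero ht0.ne', Real.log_one] at h
      linarith
    have hinv : 1 / t = s / b := by rw [ht, one_div_div]
    have hkey2 : b * Real.log t > b - s := by
      rw [hinv] at hkey
      have := mul_lt_mul_of_pos_left hkey hb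
      have hsb : b * (s / b) = s := by field_simp
      nlinarith
    have hbl : b * (Real.log t + Real.log (u y)) ≤ b * Real.log (u (t • y)) :=
      mul_le_mul_of_nonneg_left hlog hb.le
    rw [hdotb]
    nlinarith [hbl, hkey2]
  refine ⟨main, ?_⟩
  intro y hyG
  obtain ⟨hy, huy, hopt⟩ := hyG
  by_contra hc
  push_neg at hc
  obtain ⟨hle, hlt⟩ := main y hy huy hc
  have hz0 : 0 ≤ (b / dot q y) • y := by
    intro j
    have := hy j
    have ht0 : 0 < b / dot q y := div_pos hb (hb.trans hc)
    exact mul_nonneg ht0.le (hy j)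
  have hzpos : 0 < u ((b / dot q y) • y) := by
    have hs0 : 0 < dot q y := hb.trans hc
    set t := b / dot q y with ht
    have ht0 : 0 < t := div_pos hb hs0
    have hcc := hu.concave.2 (hy : y ∈ {x : M → ℝ | 0 ≤ x}) (by simp [Set.mem_setOf_eq, le_refl] :
      (0 : M → ℝ) ∈ {x : M → ℝ | 0 ≤ x}) ht0.le
      (by have := (div_lt_one hs0).mpr hc; linarith : (0:ℝ) ≤ 1 - t)
      (by ring : t + (1 - t) = 1)
    have hty : t • y + (1 - t) • (0 : M → ℝ) = t • y := by simp
    rw [hty, hu.zero] at hcc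
    have : t * u y ≤ u (t • y) := by simpa [smul_eq_mul] using hcc
    exact lt_of_lt_of_le (mul_pos ht0 huy) this
  have := hopt _ hz0 hzpos
  linarith

end
end

section
/- Let u be a utility function on a finite set M of goods and b > 0. Then: (i) for any q ∈ F^u, sup{ b·log u(y) − ⟨q,y⟩ : y ≥ 0, u(y) > 0 } < ∞ (the finiteness in the definition of F^u holds for every budget b > 0, not just some); (ii) every strictly positive price vector q > 0 belongs to F^u; (iii) if q ≥ q' ≥ 0 have the same sets of zero coordinates ({j : q'_j = 0} = {j : q_j = 0}) and q ∈ F^u, then q' ∈ F^u; (iv) if p ≥ 0 satisfies sup{ log u(y) : y ≥ 0, u(y) > 0, ⟨p,y⟩ ≤ b } < ∞, then p ∈ F^u. -/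
open scoped BigOperators

noncomputable section

/-- `F^u`: prices at which the Gale objective is bounded above for some budget. -/
def FsetU {M : Type*} [Fintype M] (u : (M → ℝ) → ℝ) : Set (M → ℝ) :=
  {q | 0 ≤ q ∧ ∃ b : ℝ, 0 < b ∧ BddAbove (galeVals u q b)}

lemma dot_nonneg' {M : Type*} [Fintype M] {q y : M → ℝ} (hq : 0 ≤ q) (hy : 0 ≤ y) :
    0 ≤ dot q y :=
  Finset.sum_nonneg fun j _ => mul_nonneg (hq j) (hy j)

lemma dot_smul' {M : Type*} [Fintype M] (q : M → ℝ) (c : ℝ) (y : M → ℝ) :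
    dot q (c • y) = c * dot q y := by
  simp only [dot, Pi.smul_apply, smul_eq_mul, Finset.mul_sum]
  exact Finset.sum_congr rfl fun j _ => by ring

lemma utility_smul_le {M : Type*} [Fintype M] {u : (M → ℝ) → ℝ} (hu : IsUtility u)
    {y : M → ℝ} (hy : 0 ≤ y) {c : ℝ} (hc0 : 0 ≤ c) (hc1 : c ≤ 1) :
    c * u y ≤ u (c • y) := by
  have h0 : (0 : M → ℝ) ∈ {x : M → ℝ | 0 ≤ x} := by
    simp only [Set.mem_setOf_eq]; exact le_rfl
  have hy' : y ∈ {x : M → ℝ | 0 ≤ x} := by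
    simp only [Set.mem_setOf_eq]; exact hy
  have h := hu.concave.2 hy' h0 hc0 (by linarith : (0:ℝ) ≤ 1 - c) (by ring)
  simpa [hu.zero, smul_eq_mul] using h

lemma gale_key {M : Type*} [Fintype M] {u : (M → ℝ) → ℝ} (hu : IsUtility u)
    {q : M → ℝ} {b C : ℝ} (hb : 0 < b)
    (hC : C ∈ upperBounds (galeVals u q b)) {lam : ℝ} (h0 : 0 < lam) (h1 : lam ≤ 1)
    {y : M → ℝ} (hy : 0 ≤ y) (huy : 0 < u y) :
    b * Real.log (u y) - lam * dot q y ≤ C - b * Real.log lam := by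
  have hsum : lam * u y ≤ u (lam • y) := utility_smul_le hu hy h0.le h1
  have hpos : 0 < u (lam • y) := lt_of_lt_of_le (mul_pos h0 huy) hsum
  have hmem : b * Real.log (u (lam • y)) - dot q (lam • y) ∈ galeVals u q b :=
    ⟨lam • y, ⟨smul_nonneg h0.le hy, hpos⟩, rfl⟩
  have hub := hC hmem
  rw [dot_smul'] at hub
  have hlog : Real.log lam + Real.log (u y) ≤ Real.log (u (lam • y)) := by
    rw [← Real.log_mul (ne_of_gt h0) (ne_of_gt huy)]
    exact Real.log_le_log (mul_pos h0 huy) hsum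
  nlinarith [hlog, hub, hb]

/-- Basic properties of the price domain `F^u`:
(i) finiteness of the Gale objective holds for every budget `b > 0`;
(ii) every strictly positive price vector is in `F^u`;
(iii) decreasing prices while keeping the same zero coordinates stays in `F^u`;
(iv) if the utility is bounded on the budget set then the prices are in `F^u`. -/
theorem Fset_properties {M : Type*} [Fintype M]
    (u : (M → ℝ) → ℝ) (hu : IsUtility u) (b : ℝ) (hb : 0 < b) :
    (∀ q ∈ FsetU u, BddAbove (galeVals u q b)) ∧
    (∀ q : M → ℝ, (∀ j, 0 < q j) → q ∈ FsetU u) ∧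
    (∀ q q' : M → ℝ, 0 ≤ q' → q' ≤ q → (∀ j, q' j = 0 ↔ q j = 0) →
      q ∈ FsetU u → q' ∈ FsetU u) ∧
    (∀ p : M → ℝ, 0 ≤ p →
      BddAbove ((fun y => Real.log (u y)) ''
        {y : M → ℝ | 0 ≤ y ∧ 0 < u y ∧ dot p y ≤ b}) →
      p ∈ FsetU u) := by
  refine ⟨?_, ?_, ?_, ?_⟩
  -- (i)
  · rintro q ⟨hq0, b', hb', C, hC⟩
    rcases le_or_gt b b' with hbb' | hbb'
    · refine ⟨max C 0, ?_⟩
      rintro v ⟨y, ⟨hy0, hyu⟩, rfl⟩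
      have hmem := hC ⟨y, ⟨hy0, hyu⟩, rfl⟩
      simp only at hmem ⊢
      rcases le_or_gt 1 (u y) with h1 | h1
      · have hl : 0 ≤ Real.log (u y) := Real.log_nonneg h1
        have h2 : b * Real.log (u y) ≤ b' * Real.log (u y) :=
          mul_le_mul_of_nonneg_right hbb' hl
        have := le_max_left C (0:ℝ)
        linarith
      · have hl : Real.log (u y) ≤ 0 := Real.log_nonpos hyu.le h1.le
        have hd := dot_nonneg' hq0 hy0
        have h2 : b * Real.log (u y) ≤ 0 := mul_nonpos_of_nonneg_of_nonpos hb.le hl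
        have := le_max_right C (0:ℝ)
        linarith
    · refine ⟨(b / b') * (C - b' * Real.log (b'/b)), ?_⟩
      rintro v ⟨y, ⟨hy0, hyu⟩, rfl⟩
      have hlam0 : 0 < b'/b := div_pos hb' hb
      have hlam1 : b'/b ≤ 1 := by rw [div_le_one hb]; exact hbb'.le
      have h1 := gale_key hu hb' hC hlam0 hlam1 hy0 hyu
      have h2 := mul_le_mul_of_nonneg_left h1 (le_of_lt (div_pos hb hb'))
      have e1 : (b/b') * (b' * Real.log (u y) - (b'/b) * dot q y)
          = b * Real.log (u y) - dot q y := by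
        field_simp
      simp only
      linarith [e1 ▸ h2]
  -- (ii)
  · intro q hq
    refine ⟨fun j => (hq j).le, ?_⟩
    rcases isEmpty_or_nonempty M with hM | hM
    · obtain ⟨x, hx0, hxpos⟩ := hu.exists_pos
      have hx : x = 0 := funext fun j => isEmptyElim j
      rw [hx, hu.zero] at hxpos
      exact absurd hxpos (lt_irrefl 0)
    · obtain ⟨x₀, hx₀, hx₀pos⟩ := hu.exists_pos
      set T : ℝ := 1 + ∑ j, x₀ j with hT
      clear_value T
      have hTpos : 0 < T := by
        have : 0 ≤ ∑ j, x₀ j := Finset.sum_nonneg fun j _ => hx₀ j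
        linarith
      set z : M → ℝ := fun _ => T with hz
      have hz0 : 0 ≤ z := fun j => hTpos.le
      have hxz : x₀ ≤ z := fun j => by
        have := Finset.single_le_sum (fun i (_ : i ∈ Finset.univ) => hx₀ i)
          (Finset.mem_univ j)
        simp only [hz]
        linarith
      have hA : 0 < u z := lt_of_lt_of_le hx₀pos (hu.mono hx₀ hxz)
      set qm := Finset.univ.inf' Finset.univ_nonempty q with hqm
      have hqmpos : 0 < qm := (Finset.lt_inf'_iff _).2 fun j _ => hq j
      refine ⟨qm * T, mul_pos hqmpos hTpos, ⟨qm * T * Real.log (u z), ?_⟩⟩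
      rintro v ⟨y, ⟨hy0, hyu⟩, rfl⟩
      simp only
      set S := ∑ j, y j with hS
      clear_value S
      have hS0 : 0 ≤ S := by
        rw [hS]; exact Finset.sum_nonneg fun j _ => hy0 j
      set s := 1 + S / T with hs
      clear_value s
      have hs1 : 1 ≤ s := by
        have : 0 ≤ S / T := div_nonneg hS0 hTpos.le
        linarith
      have hs0 : 0 < s := lt_of_lt_of_le one_pos hs1
      have hsT : s * T = T + S := by
        rw [hs]; field_simp
      have hyz : y ≤ s • z := fun j => by
        have hj : y j ≤ S := by
          rw [hS]
          exact Finset.single_le_sum (fun i (_ : i ∈ Finset.univ) => hy0 i)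
            (Finset.mem_univ j)
        have : (s • z) j = s * T := rfl
        rw [this, hsT]
        linarith
      have hinv : (1/s) * u (s • z) ≤ u ((1/s) • (s • z)) :=
        utility_smul_le hu (smul_nonneg hs0.le hz0) (by positivity)
          (by rw [div_le_one hs0]; exact hs1)
      have hzz : (1/s) • (s • z) = z := by
        rw [smul_smul]; rw [one_div_mul_cancel hs0.ne']; simp
      rw [hzz] at hinv
      have huy_le : u y ≤ s * u z := by
        have h1 : u y ≤ u (s • z) := hu.mono hy0 hyz
        rw [div_mul_eq_mul_div, one_mul, div_le_iff₀ hs0] at hinv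
        nlinarith [hinv]
      have hlog : Real.log (u y) ≤ Real.log s + Real.log (u z) := by
        rw [← Real.log_mul hs0.ne' hA.ne']
        exact Real.log_le_log hyu huy_le
      have hlogs : Real.log s ≤ S / T := by
        have h := Real.log_le_sub_one_of_pos hs0
        rw [hs] at h ⊢
        linarith
      have hdot : qm * S ≤ dot q y := by
        rw [hS, dot, Finset.mul_sum]
        exact Finset.sum_le_sum fun j _ =>
          mul_le_mul_of_nonneg_right (Finset.inf'_le _ (Finset.mem_univ j)) (hy0 j)
      have hcomb : Real.log (u y) ≤ S / T + Real.log (u z) := by linarith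
      have hmul := mul_le_mul_of_nonneg_left hcomb (mul_pos hqmpos hTpos).le
      have e : qm * T * (S / T + Real.log (u z)) = qm * S + qm * T * Real.log (u z) := by
        field_simp
      linarith [e ▸ hmul]
  -- (iii)
  · rintro q q' hq'0 hle hzero ⟨hq0, b0, hb0, C, hC⟩
    set c : ℝ := 1 + ∑ j, (if q' j = 0 then 0 else q j / q' j) with hc
    have hterm : ∀ j, 0 ≤ (if q' j = 0 then 0 else q j / q' j) := fun j => by
      split
      · exact le_rfl
      · exact div_nonneg (hq0 j) (hq'0 j)
    have hc1 : 1 ≤ c := le_add_of_nonneg_right (Finset.sum_nonneg fun j _ => hterm j)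
    have hc0 : 0 < c := lt_of_lt_of_le one_pos hc1
    have hkey : ∀ j, (1/c) * q j ≤ q' j := fun j => by
      by_cases h : q j = 0
      · rw [h, mul_zero]; exact hq'0 j
      · have hq'j : q' j ≠ 0 := fun h' => h ((hzero j).1 h')
        have hq'pos : 0 < q' j := lt_of_le_of_ne (hq'0 j) (Ne.symm hq'j)
        have hrat : q j / q' j ≤ c := by
          have hs := Finset.single_le_sum (fun i (_ : i ∈ Finset.univ) => hterm i)
            (Finset.mem_univ j)
          rw [if_neg hq'j] at hs
          rw [hc]; linarith
        rw [div_le_iff₀ hq'pos] at hrat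
        calc (1/c) * q j ≤ (1/c) * (c * q' j) :=
              mul_le_mul_of_nonneg_left hrat (by positivity)
          _ = q' j := by field_simp
    refine ⟨hq'0, b0, hb0, ⟨C - b0 * Real.log (1/c), ?_⟩⟩
    rintro v ⟨y, ⟨hy0, hyu⟩, rfl⟩
    simp only
    have hlam0 : (0:ℝ) < 1/c := by positivity
    have hlam1 : 1/c ≤ 1 := by rw [div_le_one hc0]; exact hc1
    have h1 := gale_key hu hb0 hC hlam0 hlam1 hy0 hyu
    have h2 : (1/c) * dot q y ≤ dot q' y := by
      rw [dot, dot, Finset.mul_sum]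
      exact Finset.sum_le_sum fun j _ => by
        have := mul_le_mul_of_nonneg_right (hkey j) (hy0 j)
        nlinarith [this]
    linarith
  -- (iv)
  · rintro p hp ⟨D, hD⟩
    refine ⟨hp, b, hb, ⟨b * D, ?_⟩⟩
    rintro v ⟨y, ⟨hy0, hyu⟩, rfl⟩
    simp only
    rcases le_or_gt (dot p y) b with hcase | hcase
    · have h1 : Real.log (u y) ≤ D := hD ⟨y, ⟨hy0, hyu, hcase⟩, rfl⟩
      have h2 : 0 ≤ dot p y := dot_nonneg' hp hy0
      nlinarith
    · set t := b / dot p y with ht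
      have hdpos : 0 < dot p y := lt_trans hb hcase
      have ht0 : 0 < t := div_pos hb hdpos
      have ht1 : t ≤ 1 := by rw [ht, div_le_one hdpos]; exact hcase.le
      have hsc := utility_smul_le hu hy0 ht0.le ht1
      have hupos : 0 < u (t • y) := lt_of_lt_of_le (mul_pos ht0 hyu) hsc
      have hbud : dot p (t • y) ≤ b := by
        rw [dot_smul', ht]; field_simp; exact le_rfl
      have h1 : Real.log (u (t • y)) ≤ D :=
        hD ⟨t • y, ⟨smul_nonneg ht0.le hy0, hupos, hbud⟩, rfl⟩
      have hlog : Real.log t + Real.log (u y) ≤ Real.log (u (t • y)) := by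
        rw [← Real.log_mul ht0.ne' hyu.ne']
        exact Real.log_le_log (mul_pos ht0 hyu) hsc
      have h3 : Real.log (1/t) ≤ 1/t - 1 := Real.log_le_sub_one_of_pos (by positivity)
      have h4 : Real.log (1/t) = - Real.log t := by rw [one_div, Real.log_inv]
      have h5 : b * (1/t) = dot p y := by rw [ht]; field_simp
      -- b log u y ≤ b D - b log t; -b log t ≤ b(1/t) - b = dot - b
      have h6 : b * Real.log (u y) ≤ b * D - b * Real.log t := by nlinarith [hlog, h1, hb]
      have h7 : - (b * Real.log t) ≤ dot p y - b := by nlinarith [h3, h4, hb, h5]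
      linarith


end
end

section
/- Let G = (V,E) be a finite directed graph with sink t ∈ V, supply set M = S ⊆ V∖{t}, capacities h ∈ ℝ≥0^E and gains γ ∈ ℝ>0^E, and suppose that for every supply vector x ∈ ℝ≥0^M the maximum generalized flow value u(x) = max{ e(f,t) : f feasible with supply x } is finite. Then the generalized network utility u : ℝ≥0^M → ℝ is monotone non-decreasing (x ≤ x' componentwise implies u(x) ≤ u(x')) and concave, and it satisfies Assumption (*). -/
open scoped BigOperators

noncomputable section

/-- The net flow `e(f,v) = ∑_{e entering v} γ_e f_e − ∑_{e leaving v} f_e` of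
`f : E → ℝ` at a node `v`, in a directed multigraph with arcs `E`, endpoint maps
`src, tgt : E → V` and gain factors `γ`. -/
def netFlow {V E : Type*} [Fintype E] [DecidableEq V]
    (src tgt : E → V) (γ : E → ℝ) (f : E → ℝ) (v : V) : ℝ :=
  (∑ e ∈ Finset.univ.filter (fun e => tgt e = v), γ e * f e) -
    ∑ e ∈ Finset.univ.filter (fun e => src e = v), f e

/-- `f` is a feasible generalized flow with supply `x` (supply nodes are the image
of the embedding `ι` of the goods `Mty` into the nodes), capacities `h` and sink
`t`. -/
def FeasibleFlow {V E Mty : Type*} [Fintype E] [DecidableEq V]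
    (src tgt : E → V) (γ h : E → ℝ) (t : V) (ι : Mty → V)
    (x : Mty → ℝ) (f : E → ℝ) : Prop :=
  0 ≤ f ∧ f ≤ h ∧ (∀ j : Mty, -(x j) ≤ netFlow src tgt γ f (ι j)) ∧
    ∀ v : V, v ≠ t → (∀ j : Mty, ι j ≠ v) → 0 ≤ netFlow src tgt γ f v

/-- The maximum generalized flow value reaching the sink `t` from supply `x`:
the generalized network utility function. -/
noncomputable def flowValue {V E Mty : Type*} [Fintype E] [DecidableEq V]
    (src tgt : E → V) (γ h : E → ℝ) (t : V) (ι : Mty → V) (x : Mty → ℝ) : ℝ :=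
  sSup ((fun f => netFlow src tgt γ f t) ''
    {f : E → ℝ | FeasibleFlow src tgt γ h t ι x f})

namespace GenFlowAux

open Filter Topology

variable {V E Mty : Type*} [Fintype E] [Fintype Mty] [DecidableEq V]
  {src tgt : E → V} {γ h : E → ℝ} {t : V} {ι : Mty → V}

lemma netFlow_zero (v : V) : netFlow src tgt γ (0 : E → ℝ) v = 0 := by
  simp [netFlow]

lemma netFlow_comb (a b : ℝ) (f g : E → ℝ) (v : V) :
    netFlow src tgt γ (a • f + b • g) v =
      a * netFlow src tgt γ f v + b * netFlow src tgt γ g v := by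
  have e1 : ∀ (c : ℝ) (u : E → ℝ) (s : Finset E),
      (∑ e ∈ s, γ e * (c * u e)) = c * ∑ e ∈ s, γ e * u e := by
    intro c u s; rw [Finset.mul_sum]; exact Finset.sum_congr rfl fun e _ => by ring
  have e2 : ∀ (c : ℝ) (u : E → ℝ) (s : Finset E),
      (∑ e ∈ s, c * u e) = c * ∑ e ∈ s, u e := fun c u s => (Finset.mul_sum _ _ _).symm
  simp only [netFlow, Pi.add_apply, Pi.smul_apply, smul_eq_mul, mul_add,
    Finset.sum_add_distrib, e1, e2]
  ring

lemma netFlow_continuous (v : V) :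
    Continuous fun f : E → ℝ => netFlow src tgt γ f v := by
  unfold netFlow
  exact (continuous_finset_sum _ fun e _ => continuous_const.mul (continuous_apply e)).sub
    (continuous_finset_sum _ fun e _ => continuous_apply e)

end GenFlowAux
namespace GenFlowAux2

open Filter Topology GenFlowAux

variable {V E Mty : Type*} [Fintype E] [Fintype Mty] [DecidableEq V]
  {src tgt : E → V} {γ h : E → ℝ} {t : V} {ι : Mty → V}

lemma feas_zero (hh : 0 ≤ h) {x : Mty → ℝ} (hx : 0 ≤ x) :
    FeasibleFlow src tgt γ h t ι x 0 :=
  ⟨le_rfl, hh, fun j => by rw [netFlow_zero]; exact neg_nonpos.mpr (hx j),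
    fun v _ _ => by rw [netFlow_zero]⟩

lemma feas_mono {x x' : Mty → ℝ} (hxx : x ≤ x') {f : E → ℝ}
    (hf : FeasibleFlow src tgt γ h t ι x f) : FeasibleFlow src tgt γ h t ι x' f :=
  ⟨hf.1, hf.2.1, fun j => le_trans (neg_le_neg (hxx j)) (hf.2.2.1 j), hf.2.2.2⟩

lemma feas_comb {a b : ℝ} (ha : 0 ≤ a) (hb : 0 ≤ b) (hab : a + b = 1)
    {x y : Mty → ℝ} {f g : E → ℝ}
    (hf : FeasibleFlow src tgt γ h t ι x f) (hg : FeasibleFlow src tgt γ h t ι y g) :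
    FeasibleFlow src tgt γ h t ι (a • x + b • y) (a • f + b • g) := by
  refine ⟨fun e => add_nonneg (mul_nonneg ha (hf.1 e)) (mul_nonneg hb (hg.1 e)),
    fun e => ?_, fun j => ?_, fun v hv hvι => ?_⟩
  · have h1 : a * f e ≤ a * h e := mul_le_mul_of_nonneg_left (hf.2.1 e) ha
    have h2 : b * g e ≤ b * h e := mul_le_mul_of_nonneg_left (hg.2.1 e) hb
    have : a * h e + b * h e = h e := by rw [← add_mul, hab, one_mul]
    simpa [this] using add_le_add h1 h2
  · rw [netFlow_comb]
    have h1 : a * (-(x j)) ≤ a * netFlow src tgt γ f (ι j) :=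
      mul_le_mul_of_nonneg_left (hf.2.2.1 j) ha
    have h2 : b * (-(y j)) ≤ b * netFlow src tgt γ g (ι j) :=
      mul_le_mul_of_nonneg_left (hg.2.2.1 j) hb
    have : (a • x + b • y) j = a * x j + b * y j := rfl
    rw [this]; linarith
  · rw [netFlow_comb]
    exact add_nonneg (mul_nonneg ha (hf.2.2.2 v hv hvι)) (mul_nonneg hb (hg.2.2.2 v hv hvι))

end GenFlowAux2
namespace GenFlowAux3

open Filter Topology GenFlowAux GenFlowAux2

set_option linter.unusedSectionVars false

variable {V E Mty : Type*} [Fintype E] [Fintype Mty] [DecidableEq V]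
  {src tgt : E → V} {γ h : E → ℝ} {t : V} {ι : Mty → V}

lemma le_flowValue {x : Mty → ℝ}
    (hbdd : BddAbove ((fun f => netFlow src tgt γ f t) ''
      {f : E → ℝ | FeasibleFlow src tgt γ h t ι x f}))
    {f : E → ℝ} (hf : FeasibleFlow src tgt γ h t ι x f) :
    netFlow src tgt γ f t ≤ flowValue src tgt γ h t ι x :=
  le_csSup hbdd ⟨f, hf, rfl⟩

lemma flowValue_nonneg (hh : 0 ≤ h) {x : Mty → ℝ} (hx : 0 ≤ x)
    (hbdd : BddAbove ((fun f => netFlow src tgt γ f t) ''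
      {f : E → ℝ | FeasibleFlow src tgt γ h t ι x f})) :
    0 ≤ flowValue src tgt γ h t ι x := by
  have := le_flowValue hbdd (feas_zero hh hx)
  rwa [netFlow_zero] at this

lemma flowValue_mono (hh : 0 ≤ h) {x x' : Mty → ℝ} (hx : 0 ≤ x) (hxx : x ≤ x')
    (hbdd : BddAbove ((fun f => netFlow src tgt γ f t) ''
      {f : E → ℝ | FeasibleFlow src tgt γ h t ι x' f})) :
    flowValue src tgt γ h t ι x ≤ flowValue src tgt γ h t ι x' :=
  csSup_le_csSup hbdd ⟨_, ⟨0, feas_zero hh hx, rfl⟩⟩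
    (Set.image_mono fun f hf => feas_mono hxx hf)

lemma flowValue_exists_near (hh : 0 ≤ h) {x : Mty → ℝ} (hx : 0 ≤ x)
    {ε : ℝ} (hε : 0 < ε) :
    ∃ f : E → ℝ, FeasibleFlow src tgt γ h t ι x f ∧
      flowValue src tgt γ h t ι x - ε < netFlow src tgt γ f t := by
  have hne : ((fun f => netFlow src tgt γ f t) ''
      {f : E → ℝ | FeasibleFlow src tgt γ h t ι x f}).Nonempty :=
    ⟨_, ⟨0, feas_zero hh hx, rfl⟩⟩
  obtain ⟨w, hw, hlt⟩ := exists_lt_of_lt_csSup hne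
    (show flowValue src tgt γ h t ι x - ε < flowValue src tgt γ h t ι x by linarith)
  obtain ⟨f, hf, rfl⟩ := hw
  exact ⟨f, hf, hlt⟩

lemma flowValue_superadd (hh : 0 ≤ h)
    (hfin : ∀ x : Mty → ℝ, 0 ≤ x →
      BddAbove ((fun f => netFlow src tgt γ f t) ''
        {f : E → ℝ | FeasibleFlow src tgt γ h t ι x f}))
    {x y : Mty → ℝ} (hx : 0 ≤ x) (hy : 0 ≤ y)
    {a b : ℝ} (ha : 0 ≤ a) (hb : 0 ≤ b) (hab : a + b = 1) :
    a * flowValue src tgt γ h t ι x + b * flowValue src tgt γ h t ι y ≤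
      flowValue src tgt γ h t ι (a • x + b • y) := by
  have hz : (0 : Mty → ℝ) ≤ a • x + b • y := fun j =>
    add_nonneg (mul_nonneg ha (hx j)) (mul_nonneg hb (hy j))
  refine le_of_forall_pos_le_add fun ε hε => ?_
  obtain ⟨f, hf, hflt⟩ := flowValue_exists_near (src := src) (tgt := tgt) (γ := γ)
    (h := h) (t := t) (ι := ι) hh hx (half_pos hε)
  obtain ⟨g, hg, hglt⟩ := flowValue_exists_near (src := src) (tgt := tgt) (γ := γ)
    (h := h) (t := t) (ι := ι) hh hy (half_pos hε)
  have h1 : a * flowValue src tgt γ h t ι x ≤ a * (netFlow src tgt γ f t + ε / 2) :=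
    mul_le_mul_of_nonneg_left (by linarith) ha
  have h2 : b * flowValue src tgt γ h t ι y ≤ b * (netFlow src tgt γ g t + ε / 2) :=
    mul_le_mul_of_nonneg_left (by linarith) hb
  have h3 : netFlow src tgt γ (a • f + b • g) t ≤ flowValue src tgt γ h t ι (a • x + b • y) :=
    le_flowValue (hfin _ hz) (feas_comb ha hb hab hf hg)
  rw [netFlow_comb] at h3
  nlinarith [mul_nonneg ha hε.le, mul_nonneg hb hε.le]

end GenFlowAux3
namespace GenFlowAux4

open Filter Topology GenFlowAux GenFlowAux2 GenFlowAux3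

set_option linter.unusedSectionVars false

variable {V E Mty : Type*} [Fintype E] [Fintype Mty] [DecidableEq V]
  {src tgt : E → V} {γ h : E → ℝ} {t : V} {ι : Mty → V}

lemma cluster (y : ℕ → Mty → ℝ) (f : ℕ → E → ℝ)
    (hfeas : ∀ n, FeasibleFlow src tgt γ h t ι (y n) (f n)) :
    ∃ (f₀ : E → ℝ) (φ : ℕ → ℕ), StrictMono φ ∧
      0 ≤ f₀ ∧ f₀ ≤ h ∧
      (∀ v : V, v ≠ t → (∀ j : Mty, ι j ≠ v) → 0 ≤ netFlow src tgt γ f₀ v) ∧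
      ∀ v : V, Tendsto (fun n => netFlow src tgt γ (f (φ n)) v) atTop
        (𝓝 (netFlow src tgt γ f₀ v)) := by
  have hmem : ∀ n, f n ∈ Set.Icc (0 : E → ℝ) h := fun n =>
    Set.mem_Icc.mpr ⟨(hfeas n).1, (hfeas n).2.1⟩
  obtain ⟨f₀, hf₀mem, φ, hφ, htend⟩ := (isCompact_Icc (a := (0 : E → ℝ)) (b := h)).tendsto_subseq hmem
  have hnf : ∀ v : V, Tendsto (fun n => netFlow src tgt γ (f (φ n)) v) atTop
      (𝓝 (netFlow src tgt γ f₀ v)) := fun v =>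
    ((netFlow_continuous v).tendsto f₀).comp htend
  refine ⟨f₀, φ, hφ, hf₀mem.1, hf₀mem.2, fun v hv hvι => ?_, hnf⟩
  exact ge_of_tendsto (hnf v) (Eventually.of_forall fun n => (hfeas (φ n)).2.2.2 v hv hvι)

end GenFlowAux4

open Filter Topology GenFlowAux GenFlowAux2 GenFlowAux3 GenFlowAux4

/-- A generalized network utility function is monotone non-decreasing and concave
on the nonnegative orthant, and satisfies Assumption (*). -/
theorem genFlow_utility_basic {V E Mty : Type*}
    [Fintype V] [Fintype E] [Fintype Mty] [DecidableEq V]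
    (src tgt : E → V) (t : V) (ι : Mty → V)
    (hι : Function.Injective ι) (hιt : ∀ j, ι j ≠ t)
    (h γ : E → ℝ) (hh : 0 ≤ h) (hγ : ∀ e, 0 < γ e)
    (hfin : ∀ x : Mty → ℝ, 0 ≤ x →
      BddAbove ((fun f => netFlow src tgt γ f t) ''
        {f : E → ℝ | FeasibleFlow src tgt γ h t ι x f})) :
    (∀ x x' : Mty → ℝ, 0 ≤ x → x ≤ x' →
      flowValue src tgt γ h t ι x ≤ flowValue src tgt γ h t ι x') ∧
    ConcaveOn ℝ {x : Mty → ℝ | 0 ≤ x} (flowValue src tgt γ h t ι) ∧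
    AssumptionStar (flowValue src tgt γ h t ι) := by
  classical
  set u : (Mty → ℝ) → ℝ := flowValue src tgt γ h t ι with hudef
  have mono : ∀ x x' : Mty → ℝ, 0 ≤ x → x ≤ x' → u x ≤ u x' := fun x x' hx hxx =>
    flowValue_mono hh hx hxx (hfin x' (le_trans hx hxx))
  have superadd : ∀ {x y : Mty → ℝ}, 0 ≤ x → 0 ≤ y → ∀ {a c : ℝ}, 0 ≤ a → 0 ≤ c →
      a + c = 1 → a * u x + c * u y ≤ u (a • x + c • y) := by
    intro x y hx hy a c ha hc hac
    exact flowValue_superadd hh hfin hx hy ha hc hac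
  have conc : ConcaveOn ℝ {x : Mty → ℝ | 0 ≤ x} u := by
    refine ⟨convex_Ici (0 : Mty → ℝ), fun x hx y hy a c ha hc hac => ?_⟩
    simpa [smul_eq_mul] using superadd hx hy ha hc hac
  have hu0nn : 0 ≤ u 0 := flowValue_nonneg hh le_rfl (hfin 0 le_rfl)
  refine ⟨mono, conc, ?_⟩
  intro p hp b hb xs hxs hdot M' hM'
  have hu0 : u 0 ≤ M' :=
    ge_of_tendsto hM' (Eventually.of_forall fun k => mono 0 (xs k) le_rfl (hxs k))
  have hdotnn : ∀ k, 0 ≤ dot p (xs k) := fun k =>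
    Finset.sum_nonneg fun j _ => mul_nonneg (hp j) (hxs k j)
  set θ : ℕ → ℝ := fun k => b / max b (dot p (xs k)) with hθdef
  have hmaxpos : ∀ k, 0 < max b (dot p (xs k)) := fun k => lt_max_of_lt_left hb
  have hθpos : ∀ k, 0 < θ k := fun k => div_pos hb (hmaxpos k)
  have hθle1 : ∀ k, θ k ≤ 1 := fun k => div_le_one_of_le₀ (le_max_left _ _) (hmaxpos k).le
  set y : ℕ → Mty → ℝ := fun k => θ k • xs k with hydef
  have hy0 : ∀ k, 0 ≤ y k := fun k j => mul_nonneg (hθpos k).le (hxs k j)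
  have hdot_smul : ∀ (c : ℝ) (z : Mty → ℝ), dot p (c • z) = c * dot p z := by
    intro c z
    unfold dot
    rw [Finset.mul_sum]
    exact Finset.sum_congr rfl fun j _ => by simp [Pi.smul_apply]; ring
  have hdoty : ∀ k, dot p (y k) ≤ b := by
    intro k
    rw [hydef, hdot_smul]
    have h1 : θ k * dot p (xs k) ≤ θ k * max b (dot p (xs k)) :=
      mul_le_mul_of_nonneg_left (le_max_right _ _) (hθpos k).le
    have h2 : θ k * max b (dot p (xs k)) = b := div_mul_cancel₀ b (hmaxpos k).ne'
    linarith
  have huy : ∀ k, θ k * u (xs k) ≤ u (y k) := by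
    intro k
    have h2 := superadd (hxs k) (le_refl (0 : Mty → ℝ)) (hθpos k).le
      (by linarith [hθle1 k] : (0:ℝ) ≤ 1 - θ k) (by ring)
    have hz : θ k • xs k + (1 - θ k) • (0 : Mty → ℝ) = y k := by
      rw [hydef]; simp
    rw [hz] at h2
    nlinarith [hθle1 k, hu0nn, (hθpos k).le]
  have hmaxtend : Tendsto (fun k => max b (dot p (xs k))) atTop (𝓝 b) := by
    simpa [max_self] using (tendsto_const_nhds (x := b)).max hdot
  have hθtend : Tendsto θ atTop (𝓝 1) := by
    have := Filter.Tendsto.div (tendsto_const_nhds (x := b)) hmaxtend hb.ne'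
    rw [div_self hb.ne'] at this; exact this
  have htmul : Tendsto (fun k => θ k * u (xs k)) atTop (𝓝 M') := by
    simpa using hθtend.mul hM'
  have hone : Tendsto (fun n : ℕ => (1:ℝ)/(n+1)) atTop (𝓝 0) :=
    tendsto_one_div_add_atTop_nhds_zero_nat
  have hnear : ∀ k : ℕ, ∃ f : E → ℝ, FeasibleFlow src tgt γ h t ι (y k) f ∧
      u (y k) - 1/(k+1) < netFlow src tgt γ f t := fun k =>
    flowValue_exists_near hh (hy0 k) (by positivity)
  choose f hfeas hflow using hnear
  obtain ⟨f₀, φ, hφ, hf00, hf0h, hcons, hnf⟩ := cluster y f hfeas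
  have h1 : Tendsto (fun n => θ (φ n) * u (xs (φ n)) - 1/(φ n + 1)) atTop (𝓝 M') := by
    have ha := htmul.comp hφ.tendsto_atTop
    have hc := hone.comp hφ.tendsto_atTop
    simpa using ha.sub hc
  have hM'le : M' ≤ netFlow src tgt γ f₀ t := by
    refine le_of_tendsto_of_tendsto' h1 (hnf t) fun n => ?_
    have ha := hflow (φ n)
    have hc := huy (φ n)
    linarith
  set xh : Mty → ℝ := fun j => max 0 (-(netFlow src tgt γ f₀ (ι j))) with hxhdef
  have hxh0 : 0 ≤ xh := fun j => le_max_left _ _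
  have hfeasxh : FeasibleFlow src tgt γ h t ι xh f₀ := by
    refine ⟨hf00, hf0h, fun j => ?_, hcons⟩
    have h3 : -(netFlow src tgt γ f₀ (ι j)) ≤ xh j := le_max_right _ _
    linarith
  have huxh : M' ≤ u xh := le_trans hM'le (le_flowValue (hfin xh hxh0) hfeasxh)
  have hdotxh : dot p xh ≤ b := by
    have htendd : Tendsto
        (fun n => ∑ j, p j * max 0 (-(netFlow src tgt γ (f (φ n)) (ι j)))) atTop
        (𝓝 (dot p xh)) := by
      unfold dot
      exact tendsto_finset_sum _ fun j _ =>
        tendsto_const_nhds.mul (tendsto_const_nhds.max (hnf (ι j)).neg)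
    refine le_of_tendsto htendd (Eventually.of_forall fun n => ?_)
    refine le_trans ?_ (hdoty (φ n))
    unfold dot
    refine Finset.sum_le_sum fun j _ => mul_le_mul_of_nonneg_left ?_ (hp j)
    refine max_le (hy0 (φ n) j) ?_
    have := (hfeas (φ n)).2.2.1 j
    linarith
  have hsx0 : ∀ s : ℝ, 0 ≤ s → (0 : Mty → ℝ) ≤ s • xh := fun s hs j =>
    mul_nonneg hs (hxh0 j)
  have hgmono : ∀ s s' : ℝ, 0 ≤ s → s ≤ s' → u (s • xh) ≤ u (s' • xh) := fun s s' hs hss =>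
    mono _ _ (hsx0 s hs) (fun j => mul_le_mul_of_nonneg_right hss (hxh0 j))
  set S : Set ℝ := {s | s ∈ Set.Icc (0:ℝ) 1 ∧ u (s • xh) ≤ M'} with hSdef
  have h0S : (0:ℝ) ∈ S := ⟨⟨le_rfl, zero_le_one⟩, by simpa [zero_smul] using hu0⟩
  have hSbdd : BddAbove S := ⟨1, fun s hs => hs.1.2⟩
  set s₀ : ℝ := sSup S with hs₀def
  have hs₀0 : 0 ≤ s₀ := le_csSup hSbdd h0S
  have hs₀1 : s₀ ≤ 1 := csSup_le ⟨0, h0S⟩ fun s hs => hs.1.2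
  have hbelow : ∀ s : ℝ, 0 ≤ s → s < s₀ → u (s • xh) ≤ M' := by
    intro s hs hss
    obtain ⟨s', hs'S, hlt⟩ := exists_lt_of_lt_csSup ⟨0, h0S⟩ hss
    exact le_trans (hgmono s s' hs hlt.le) hs'S.2
  have habove : ∀ s : ℝ, s₀ < s → s ≤ 1 → M' < u (s • xh) := by
    intro s hss hs1
    by_contra hle
    push_neg at hle
    exact absurd (le_csSup hSbdd ⟨⟨le_trans hs₀0 hss.le, hs1⟩, hle⟩) (not_le.mpr hss)
  have hle : u (s₀ • xh) ≤ M' := by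
    by_contra hgt
    push_neg at hgt
    have hs₀pos : 0 < s₀ := by
      rcases lt_or_eq_of_le hs₀0 with h' | h'
      · exact h'
      · rw [← h', zero_smul] at hgt; exact absurd hu0 (not_le.mpr hgt)
    have hG1G0 : u 0 < u (s₀ • xh) := lt_of_le_of_lt hu0 hgt
    set G0 : ℝ := u (0 : Mty → ℝ) with hG0
    set G1 : ℝ := u (s₀ • xh) with hG1
    set r : ℝ := ((M' - G0)/(G1 - G0) + 1)/2 with hrdef
    have hratio0 : 0 ≤ (M' - G0)/(G1 - G0) := div_nonneg (by linarith) (by linarith)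
    have hratio1 : (M' - G0)/(G1 - G0) < 1 := (div_lt_one (by linarith)).mpr (by linarith)
    have hr0 : 0 ≤ r := by rw [hrdef]; linarith
    have hr1 : r < 1 := by rw [hrdef]; linarith
    have hrgt : (M' - G0)/(G1 - G0) < r := by rw [hrdef]; linarith
    have hsup := superadd (hsx0 s₀ hs₀pos.le) (le_refl (0 : Mty → ℝ)) hr0
      (by linarith : (0:ℝ) ≤ 1 - r) (by ring)
    have heq : r • (s₀ • xh) + (1 - r) • (0 : Mty → ℝ) = (r * s₀) • xh := by
      simp [smul_smul]
    rw [heq] at hsup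
    have hb1 : u ((r * s₀) • xh) ≤ M' := hbelow _ (mul_nonneg hr0 hs₀pos.le) (by nlinarith)
    have h5 : M' - G0 = ((M' - G0)/(G1 - G0)) * (G1 - G0) :=
      (div_mul_cancel₀ _ (by linarith : G1 - G0 ≠ 0)).symm
    nlinarith
  have hge : M' ≤ u (s₀ • xh) := by
    rcases eq_or_lt_of_le hs₀1 with h1' | h1'
    · rw [h1', one_smul]; exact huxh
    · rcases eq_or_lt_of_le hs₀0 with h0' | h0'
      · -- s₀ = 0 : upper semicontinuity at 0
        by_contra hlt
        push_neg at hlt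
        have hu0lt : u 0 < M' := by rw [← h0', zero_smul] at hlt; exact hlt
        set z : ℕ → Mty → ℝ := fun n => (1/((n:ℝ)+1)) • xh with hzdef
        have hz0 : ∀ n, 0 ≤ z n := fun n => hsx0 _ (by positivity)
        have hznear : ∀ n : ℕ, ∃ g : E → ℝ, FeasibleFlow src tgt γ h t ι (z n) g ∧
            u (z n) - 1/(n+1) < netFlow src tgt γ g t := fun n =>
          flowValue_exists_near hh (hz0 n) (by positivity)
        choose f' hfeas' hflow' using hznear
        obtain ⟨f₁, ψ, hψ, h10, h1h, hcons1, hnf1⟩ := cluster z f' hfeas'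
        have honeψ : Tendsto (fun n => (1:ℝ)/((ψ n : ℝ)+1)) atTop (𝓝 0) :=
          hone.comp hψ.tendsto_atTop
        have hfeas1 : FeasibleFlow src tgt γ h t ι 0 f₁ := by
          refine ⟨h10, h1h, fun j => ?_, hcons1⟩
          simp only [Pi.zero_apply, neg_zero]
          have hbnd : Tendsto (fun n => -((1/((ψ n : ℝ)+1)) * xh j)) atTop (𝓝 (0:ℝ)) := by
            simpa using (honeψ.mul_const (xh j)).neg
          refine le_of_tendsto_of_tendsto' hbnd (hnf1 (ι j)) (fun n => ?_)
          have := (hfeas' (ψ n)).2.2.1 j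
          simpa [hzdef] using this
        have hM'f₁ : M' ≤ netFlow src tgt γ f₁ t := by
          have hbnd : Tendsto (fun n => M' - 1/((ψ n : ℝ)+1)) atTop (𝓝 M') := by
            simpa using tendsto_const_nhds.sub honeψ
          refine le_of_tendsto_of_tendsto' hbnd (hnf1 t) (fun n => ?_)
          have hzup : M' < u (z (ψ n)) := by
            have := habove (1/((ψ n : ℝ)+1)) (by rw [← h0']; positivity)
              (by rw [div_le_one (by positivity)]; simp [Nat.cast_nonneg])
            simpa [hzdef] using this
          have := hflow' (ψ n)
          linarith
        have := le_flowValue (hfin 0 le_rfl) hfeas1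
        linarith
      · -- 0 < s₀ < 1 : left limit via concavity
        set sn : ℕ → ℝ := fun n => s₀ + (1 - s₀) * (1/((n:ℝ)+1)) with hsndef
        have hsngt : ∀ n, s₀ < sn n := by
          intro n
          have : 0 < (1 - s₀) * (1/((n:ℝ)+1)) := by
            apply mul_pos (by linarith) (by positivity)
          rw [hsndef]; simpa using this
        have hsnle1 : ∀ n, sn n ≤ 1 := by
          intro n
          have h2 : (1/((n:ℝ)+1)) ≤ 1 := by
            rw [div_le_one (by positivity)]; simp [Nat.cast_nonneg]
          have h3 : (1 - s₀) * (1/((n:ℝ)+1)) ≤ (1 - s₀) * 1 :=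
            mul_le_mul_of_nonneg_left h2 (by linarith)
          rw [hsndef]; simp only; linarith
        have hsnpos : ∀ n, 0 < sn n := fun n => lt_trans h0' (hsngt n)
        set cn : ℕ → ℝ := fun n => s₀ / sn n with hcndef
        have hcn0 : ∀ n, 0 ≤ cn n := fun n => div_nonneg hs₀0 (hsnpos n).le
        have hcn1 : ∀ n, cn n ≤ 1 := fun n =>
          div_le_one_of_le₀ (hsngt n).le (hsnpos n).le
        have hkey : ∀ n, cn n * M' + (1 - cn n) * u 0 ≤ u (s₀ • xh) := by
          intro n
          have hsup := superadd (hsx0 (sn n) (hsnpos n).le) (le_refl (0 : Mty → ℝ))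
            (hcn0 n) (by linarith [hcn1 n] : (0:ℝ) ≤ 1 - cn n) (by ring)
          have heq : cn n • (sn n • xh) + (1 - cn n) • (0 : Mty → ℝ) = s₀ • xh := by
            have : cn n * sn n = s₀ := div_mul_cancel₀ s₀ (hsnpos n).ne'
            simp [smul_smul, this]
          rw [heq] at hsup
          have hup : M' < u (sn n • xh) := habove (sn n) (hsngt n) (hsnle1 n)
          nlinarith [hcn0 n]
        have hsntend : Tendsto sn atTop (𝓝 s₀) := by
          rw [hsndef]
          simpa using tendsto_const_nhds.add (hone.const_mul (1 - s₀))
        have hcntend : Tendsto cn atTop (𝓝 1) := by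
          have := Filter.Tendsto.div (tendsto_const_nhds (x := s₀)) hsntend h0'.ne'
          rw [div_self h0'.ne'] at this; exact this
        have hLtend : Tendsto (fun n => cn n * M' + (1 - cn n) * u 0) atTop (𝓝 M') := by
          have := (hcntend.mul_const M').add
            (((tendsto_const_nhds (x := (1:ℝ))).sub hcntend).mul_const (u 0))
          simpa using this
        exact le_of_tendsto hLtend (Eventually.of_forall hkey)
  refine ⟨s₀ • xh, hsx0 s₀ hs₀0, le_antisymm hle hge, ?_⟩
  rw [hdot_smul]
  have hdxh0 : 0 ≤ dot p xh := Finset.sum_nonneg fun j _ => mul_nonneg (hp j) (hxh0 j)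
  nlinarith

end
end
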